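/- arXiv:math/0312500 — 3 statements merged into one kernel-verified Lean document; each statement's English description precedes it below -/
import Mathlib

section
/- Let G be a nontrivial finite group, ρ : G → GL(d, ℤ) an injective homomorphism, and f : G → ℝ^d/ℤ^d a 1-cocycle. Then the generalized crystallographic group Crys(G; ρ; f) is torsion-free if and only if for every subgroup H of G of prime order, the restriction of f to H is not a 1-coboundary of H (i.e., there is no z ∈ ℝ^d/ℤ^d with f(h) = h•z − z for all h ∈ H). -/
open Matrix

namespace GenCrys

variable {K : Type*} [CommRing K] {F : Type*} [Field F] {G : Type*} [Group G]

/-- The lattice `K^d` inside `F^d`, embedded via the ring hom `φ`. -/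
def latt (φ : K →+* F) (d : ℕ) : AddSubgroup (Fin d → F) where
  carrier := {x | ∀ i, ∃ m : K, x i = φ m}
  zero_mem' := fun i => ⟨0, by simp⟩
  add_mem' := by
    intro x y hx hy i
    obtain ⟨mx, hmx⟩ := hx i
    obtain ⟨my, hmy⟩ := hy i
    exact ⟨mx + my, by simp [hmx, hmy]⟩
  neg_mem' := by
    intro x hx i
    obtain ⟨m, hm⟩ := hx i
    exact ⟨-m, by simp [hm]⟩

/-- The "torus" `F^d / K^d`. -/
abbrev Torus (φ : K →+* F) (d : ℕ) : Type _ := (Fin d → F) ⧸ latt φ d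

/-- The canonical projection `F^d → F^d/K^d`. -/
def mkT (φ : K →+* F) {d : ℕ} : (Fin d → F) →+ Torus φ d := QuotientAddGroup.mk' (latt φ d)

lemma mulVec_mem_latt (φ : K →+* F) {d : ℕ} (M : Matrix (Fin d) (Fin d) K) {x : Fin d → F}
    (hx : x ∈ latt φ d) : (M.map φ).mulVec x ∈ latt φ d := by
  choose m hm using hx
  intro i
  refine ⟨∑ j, M i j * m j, ?_⟩
  simp [Matrix.mulVec, dotProduct, Matrix.map_apply, hm, map_sum, _root_.map_mul]

/-- The action of an integral matrix on the torus `F^d/K^d`. -/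
def torusMap (φ : K →+* F) {d : ℕ} (M : Matrix (Fin d) (Fin d) K) : Torus φ d →+ Torus φ d :=
  QuotientAddGroup.map (latt φ d) (latt φ d)
    (AddMonoidHom.mk' (fun x => (M.map φ).mulVec x) (fun x y => Matrix.mulVec_add _ x y))
    (fun x hx => mulVec_mem_latt φ M hx)

lemma torusMap_mk (φ : K →+* F) {d : ℕ} (M : Matrix (Fin d) (Fin d) K) (x : Fin d → F) :
    torusMap φ M (mkT φ x) = mkT φ ((M.map φ).mulVec x) := rfl

lemma torusMap_one (φ : K →+* F) {d : ℕ} (z : Torus φ d) :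
    torusMap φ (1 : Matrix (Fin d) (Fin d) K) z = z := by
  refine QuotientAddGroup.induction_on z fun x => ?_
  show torusMap φ (1 : Matrix (Fin d) (Fin d) K) (mkT φ x) = mkT φ x
  rw [torusMap_mk]
  congr 1
  simp

/-- A 1-cocycle of `G` with values in the torus, with `G` acting via `ρ`. -/
def IsCocycle (φ : K →+* F) {d : ℕ} (ρ : G →* Matrix.GeneralLinearGroup (Fin d) K)
    (f : G → Torus φ d) : Prop :=
  ∀ g g' : G, f (g * g') = torusMap φ (ρ g : Matrix (Fin d) (Fin d) K) (f g') + f g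

/-- The restriction of `f` to the subgroup `H` is a 1-coboundary. -/
def IsCoboundaryOn (φ : K →+* F) {d : ℕ} (ρ : G →* Matrix.GeneralLinearGroup (Fin d) K)
    (f : G → Torus φ d) (H : Subgroup G) : Prop :=
  ∃ z : Torus φ d, ∀ h ∈ H, f h = torusMap φ (ρ h : Matrix (Fin d) (Fin d) K) z - z

/-- The `K[G]`-module `K^d` (with `g` acting as `ρ g`) is indecomposable. -/
def Indecomposable {d : ℕ} (ρ : G →* Matrix.GeneralLinearGroup (Fin d) K) : Prop :=
  ¬ ∃ A B : Submodule K (Fin d → K),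
      (∀ g : G, ∀ x ∈ A, (ρ g : Matrix (Fin d) (Fin d) K).mulVec x ∈ A) ∧
      (∀ g : G, ∀ x ∈ B, (ρ g : Matrix (Fin d) (Fin d) K).mulVec x ∈ B) ∧
      A ≠ ⊥ ∧ B ≠ ⊥ ∧ A ⊓ B = ⊥ ∧ A ⊔ B = ⊤

/-- The semidirect product `F^d ⋊ G`, with `G` acting via `ρ`. -/
@[ext] structure SD (φ : K →+* F) {d : ℕ} (ρ : G →* Matrix.GeneralLinearGroup (Fin d) K) where
  vec : Fin d → F
  grp : G

namespace SD

variable (φ : K →+* F) {d : ℕ} (ρ : G →* Matrix.GeneralLinearGroup (Fin d) K)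

/-- The action of `g : G` on `F^d` via `ρ`. -/
def act (g : G) (x : Fin d → F) : Fin d → F :=
  ((ρ g : Matrix (Fin d) (Fin d) K).map φ).mulVec x

lemma act_add (g : G) (x y : Fin d → F) :
    act φ ρ g (x + y) = act φ ρ g x + act φ ρ g y := Matrix.mulVec_add _ x y

lemma act_zero (g : G) : act φ ρ g (0 : Fin d → F) = 0 := Matrix.mulVec_zero _

lemma act_one (x : Fin d → F) : act φ ρ 1 x = x := by
  simp [act, Matrix.map_one]

lemma act_mul (g h : G) (x : Fin d → F) :
    act φ ρ (g * h) x = act φ ρ g (act φ ρ h x) := by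
  simp [act, Matrix.mulVec_mulVec, ← Matrix.map_mul, _root_.map_mul]

instance : Mul (SD φ ρ) := ⟨fun c c' => ⟨c.vec + act φ ρ c.grp c'.vec, c.grp * c'.grp⟩⟩
instance : One (SD φ ρ) := ⟨⟨0, 1⟩⟩
instance : Inv (SD φ ρ) := ⟨fun c => ⟨-(act φ ρ c.grp⁻¹ c.vec), c.grp⁻¹⟩⟩

@[simp] lemma mul_vec (c c' : SD φ ρ) :
    (c * c').vec = c.vec + act φ ρ c.grp c'.vec := rfl
@[simp] lemma mul_grp (c c' : SD φ ρ) : (c * c').grp = c.grp * c'.grp := rfl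
@[simp] lemma one_vec : (1 : SD φ ρ).vec = 0 := rfl
@[simp] lemma one_grp : (1 : SD φ ρ).grp = 1 := rfl
@[simp] lemma inv_vec (c : SD φ ρ) : c⁻¹.vec = -(act φ ρ c.grp⁻¹ c.vec) := rfl
@[simp] lemma inv_grp (c : SD φ ρ) : c⁻¹.grp = c.grp⁻¹ := rfl

instance : Group (SD φ ρ) where
  mul_assoc a b c := by
    ext1
    · simp [act_mul, act_add, add_assoc]
    · simp [mul_assoc]
  one_mul a := by
    ext1
    · simp [act_one]
    · simp
  mul_one a := by
    ext1
    · simp [act_zero]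
    · simp
  inv_mul_cancel a := by
    ext1
    · simp
    · simp

end SD

/-- Membership in the generalized crystallographic group `Crys(G; ρ; f)`,
viewed as a subset of the semidirect product `F^d ⋊ G`. -/
def MemCrys (φ : K →+* F) {d : ℕ} (ρ : G →* Matrix.GeneralLinearGroup (Fin d) K)
    (f : G → Torus φ d) (c : SD φ ρ) : Prop :=
  mkT φ c.vec = f c.grp

/-- The generalized crystallographic group `Crys(G; ρ; f)` is torsion free. -/
def CrysTorsionFree (φ : K →+* F) {d : ℕ} (ρ : G →* Matrix.GeneralLinearGroup (Fin d) K)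
    (f : G → Torus φ d) : Prop :=
  ∀ c : SD φ ρ, MemCrys φ ρ f c → c ≠ 1 → ¬ IsOfFinOrder c

lemma cocycle_map_one (φ : K →+* F) {d : ℕ} (ρ : G →* Matrix.GeneralLinearGroup (Fin d) K)
    {f : G → Torus φ d} (hf : IsCocycle φ ρ f) : f 1 = 0 := by
  have h := hf 1 1
  rw [mul_one, _root_.map_one] at h
  have h1 : ((1 : Matrix.GeneralLinearGroup (Fin d) K) : Matrix (Fin d) (Fin d) K) = 1 :=
    Units.val_one
  rw [h1, torusMap_one] at h
  exact (right_eq_add.mp h)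

/-- The generalized crystallographic group `Crys(G; ρ; f)` as a subgroup of `F^d ⋊ G`. -/
def crysSubgroup (φ : K →+* F) {d : ℕ} (ρ : G →* Matrix.GeneralLinearGroup (Fin d) K)
    (f : G → Torus φ d) (hf : IsCocycle φ ρ f) : Subgroup (SD φ ρ) where
  carrier := {c | MemCrys φ ρ f c}
  one_mem' := by
    show mkT φ (0 : Fin d → F) = f 1
    rw [map_zero, cocycle_map_one φ ρ hf]
  mul_mem' := by
    intro c c' hc hc'
    show mkT φ (c.vec + SD.act φ ρ c.grp c'.vec) = f (c.grp * c'.grp)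
    rw [hf c.grp c'.grp, map_add, ← hc, ← hc', torusMap_mk]
    rw [add_comm]
    rfl
  inv_mem' := by
    intro c hc
    show mkT φ (-(SD.act φ ρ c.grp⁻¹ c.vec)) = f c.grp⁻¹
    have h := hf c.grp⁻¹ c.grp
    rw [inv_mul_cancel, cocycle_map_one φ ρ hf, ← hc, torusMap_mk] at h
    rw [map_neg]
    exact (eq_neg_of_add_eq_zero_right h.symm).symm

end GenCrys

namespace GenCrys

/-- The canonical embedding `ℤ → ℝ`. -/
abbrev zr : ℤ →+* ℝ := Int.castRingHom ℝ

section Aux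

variable {K : Type*} [CommRing K] {F : Type*} [Field F] {G : Type*} [Group G]

lemma torusMap_mul' (φ : K →+* F) {d : ℕ} (M N : Matrix (Fin d) (Fin d) K) (u : Torus φ d) :
    torusMap φ (M * N) u = torusMap φ M (torusMap φ N u) := by
  refine QuotientAddGroup.induction_on u fun x => ?_
  show torusMap φ (M * N) (mkT φ x) = torusMap φ M (torusMap φ N (mkT φ x))
  rw [torusMap_mk, torusMap_mk, torusMap_mk, Matrix.map_mul, Matrix.mulVec_mulVec]

variable (φ : K →+* F) {d : ℕ} (ρ : G →* Matrix.GeneralLinearGroup (Fin d) K)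

lemma act_sub (g : G) (x y : Fin d → F) :
    SD.act φ ρ g (x - y) = SD.act φ ρ g x - SD.act φ ρ g y := Matrix.mulVec_sub _ x y

lemma act_smul (g : G) (r : F) (x : Fin d → F) :
    SD.act φ ρ g (r • x) = r • SD.act φ ρ g x := Matrix.mulVec_smul _ r x

lemma act_sum (g : G) {ι : Type*} (s : Finset ι) (v : ι → Fin d → F) :
    SD.act φ ρ g (∑ i ∈ s, v i) = ∑ i ∈ s, SD.act φ ρ g (v i) := by
  classical
  induction s using Finset.induction with
  | empty => simp [SD.act_zero]
  | @insert a s h ih => rw [Finset.sum_insert h, Finset.sum_insert h, SD.act_add, ih]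

lemma pow_grp (c : SD φ ρ) (n : ℕ) : (c ^ n).grp = c.grp ^ n := by
  induction n with
  | zero => simp
  | succ n ih => rw [pow_succ, pow_succ, SD.mul_grp, ih]

lemma pow_vec (c : SD φ ρ) (n : ℕ) :
    (c ^ n).vec = ∑ i ∈ Finset.range n, SD.act φ ρ (c.grp ^ i) c.vec := by
  induction n with
  | zero => simp
  | succ n ih => rw [pow_succ, SD.mul_vec, ih, pow_grp, Finset.sum_range_succ]

lemma vec_eq_zero_of_grp_eq_one [CharZero F] (e : SD φ ρ) (he : e.grp = 1)
    (hfin : IsOfFinOrder e) : e.vec = 0 := by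
  have h1 : (e ^ orderOf e).vec = 0 := by rw [pow_orderOf_eq_one]; rfl
  rw [pow_vec, he] at h1
  simp only [one_pow, SD.act_one, Finset.sum_const, Finset.card_range] at h1
  have h2 : ((orderOf e : F)) • e.vec = 0 := by
    rw [Nat.cast_smul_eq_nsmul]; exact h1
  rcases smul_eq_zero.mp h2 with h | h
  · exact absurd (Nat.cast_eq_zero.mp h) hfin.orderOf_pos.ne'
  · exact h

lemma sum_act_eq_zero [CharZero F] (c : SD φ ρ) (hc : IsOfFinOrder c) (m : ℕ)
    (hm : c.grp ^ m = 1) :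
    ∑ i ∈ Finset.range m, SD.act φ ρ (c.grp ^ i) c.vec = 0 := by
  have h := vec_eq_zero_of_grp_eq_one φ ρ (c ^ m) (by rw [pow_grp, hm]) hc.pow
  rwa [pow_vec] at h

end Aux

/-- The generalized crystallographic group `Crys(G; ρ; f)` is torsion free if and only if for
every subgroup `H ≤ G` of prime order the restriction of the 1-cocycle `f` to `H` is not a
1-coboundary. -/
theorem crysTorsionFree_iff_not_coboundary_on_prime_order_subgroups
    (G : Type) [Group G] [Finite G] [Nontrivial G] (d : ℕ)
    (ρ : G →* Matrix.GeneralLinearGroup (Fin d) ℤ) (hρ : Function.Injective ρ)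
    (f : G → Torus zr d) (hf : IsCocycle zr ρ f) :
    CrysTorsionFree zr ρ f ↔
      ∀ H : Subgroup G, (Nat.card H).Prime → ¬ IsCoboundaryOn zr ρ f H := by
  constructor
  · -- torsion free → no coboundary on prime-order subgroups
    rintro htf H hp ⟨z, hz⟩
    have hnt : Nontrivial H := Finite.one_lt_card_iff_nontrivial.mp hp.one_lt
    obtain ⟨h0, hh0⟩ := exists_ne (1 : H)
    have hh1 : (h0 : G) ≠ 1 := by simpa using hh0
    have hpow : (h0 : G) ^ Nat.card H = 1 := by
      exact_mod_cast congrArg Subtype.val (pow_card_eq_one' (x := h0))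
    obtain ⟨x, hx⟩ := QuotientAddGroup.mk'_surjective (latt zr d) z
    set g : G := (h0 : G) with hgdef
    set c : SD zr ρ := ⟨SD.act zr ρ g x - x, g⟩ with hcdef
    have hmem : MemCrys zr ρ f c := by
      show mkT zr (SD.act zr ρ g x - x) = f g
      rw [map_sub, hz g h0.2, ← hx]
      rfl
    have hne : c ≠ 1 := fun e => hh1 (congrArg SD.grp e)
    refine htf c hmem hne (isOfFinOrder_iff_pow_eq_one.mpr ⟨Nat.card H, hp.pos, ?_⟩)
    refine SD.ext ?_ ?_
    · rw [pow_vec]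
      show ∑ i ∈ Finset.range (Nat.card H),
          SD.act zr ρ (g ^ i) (SD.act zr ρ g x - x) = (1 : SD zr ρ).vec
      have hterm : ∀ i, SD.act zr ρ (g ^ i) (SD.act zr ρ g x - x)
          = SD.act zr ρ (g ^ (i + 1)) x - SD.act zr ρ (g ^ i) x := fun i => by
        rw [act_sub, ← SD.act_mul, ← pow_succ]
      rw [Finset.sum_congr rfl fun i _ => hterm i,
        Finset.sum_range_sub (fun i => SD.act zr ρ (g ^ i) x), hpow, pow_zero, SD.act_one]
      simp
    · rw [pow_grp]
      exact hpow
  · -- no coboundary on prime-order subgroups → torsion free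
    intro hcob c hmem hne hfin
    set g : G := c.grp with hg
    have horder : IsOfFinOrder g := isOfFinOrder_of_finite g
    have hg1 : g ≠ 1 := by
      intro h1
      apply hne
      refine SD.ext ?_ h1
      have := sum_act_eq_zero zr ρ c hfin 1 (by rw [← hg, h1, pow_one])
      simpa [← hg, h1, SD.act_one] using this
    have hm1 : orderOf g ≠ 1 := fun h => hg1 (orderOf_eq_one_iff.mp h)
    set m : ℕ := orderOf g with hm
    set p : ℕ := m.minFac with hpdef
    have hp : p.Prime := Nat.minFac_prime hm1
    set k : ℕ := m / p with hk
    set h : G := g ^ k with hh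
    have hmpos : 0 < m := horder.orderOf_pos
    have hkdvd : k ∣ m := Nat.div_dvd_of_dvd (Nat.minFac_dvd m)
    have horderh : orderOf h = p := by
      rw [hh, horder.orderOf_pow, Nat.gcd_eq_right hkdvd, hk,
        Nat.div_div_self (Nat.minFac_dvd m) hmpos.ne']
    have hhp : h ^ p = 1 := by rw [← horderh]; exact pow_orderOf_eq_one h
    set c' : SD zr ρ := c ^ k with hc'
    have hgrp' : c'.grp = h := by rw [hc', pow_grp, ← hg, hh]
    set y : Fin d → ℝ := c'.vec with hy
    have hsum : ∑ i ∈ Finset.range p, SD.act zr ρ (h ^ i) y = 0 := by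
      have := sum_act_eq_zero zr ρ c' hfin.pow p (by rw [hgrp', hhp])
      rwa [hgrp'] at this
    have hmem' : mkT zr y = f h := by
      have hmemc : c ∈ crysSubgroup zr ρ f hf := hmem
      have h2 : MemCrys zr ρ f c' := pow_mem hmemc k
      rw [← hgrp']
      exact h2
    set a : ℕ → (Fin d → ℝ) := fun i => SD.act zr ρ (h ^ i) y with ha
    have ha0 : a 0 = y := by simp [ha, SD.act_one]
    have hap : a p = y := by simp [ha, hhp, SD.act_one]
    have hA : ∑ i ∈ Finset.range p, a (i + 1) = 0 := by
      have hshift : (∑ i ∈ Finset.range p, a (i + 1)) + a 0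
          = (∑ i ∈ Finset.range p, a i) + a p := by
        rw [← Finset.sum_range_succ', Finset.sum_range_succ]
      rw [hsum, ha0, hap] at hshift
      exact add_right_cancel hshift
    set S : Fin d → ℝ := ∑ i ∈ Finset.range p, (i : ℝ) • a i with hS
    have hact : SD.act zr ρ h S = ∑ i ∈ Finset.range p, (i : ℝ) • a (i + 1) := by
      rw [hS, act_sum]
      refine Finset.sum_congr rfl fun i _ => ?_
      rw [act_smul]
      congr 1
      show SD.act zr ρ h (SD.act zr ρ (h ^ i) y) = SD.act zr ρ (h ^ (i + 1)) y
      rw [← SD.act_mul, ← pow_succ']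
    have htel : ∑ i ∈ Finset.range p, (((i + 1 : ℕ) : ℝ) • a (i + 1) - (i : ℝ) • a i)
        = (p : ℝ) • y := by
      rw [Finset.sum_range_sub (fun i => (i : ℝ) • a i)]
      simp [hap]
    have hkey : SD.act zr ρ h S - S = (p : ℝ) • y := by
      rw [hact, hS]
      calc (∑ i ∈ Finset.range p, (i : ℝ) • a (i + 1))
            - ∑ i ∈ Finset.range p, (i : ℝ) • a i
          = ∑ i ∈ Finset.range p, ((i : ℝ) • a (i + 1) - (i : ℝ) • a i) :=
            (Finset.sum_sub_distrib _ _).symm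
        _ = (∑ i ∈ Finset.range p, (((i + 1 : ℕ) : ℝ) • a (i + 1) - (i : ℝ) • a i))
            - ∑ i ∈ Finset.range p, a (i + 1) := by
            rw [← Finset.sum_sub_distrib]
            refine Finset.sum_congr rfl fun i _ => ?_
            push_cast
            rw [add_smul, one_smul]
            abel
        _ = (p : ℝ) • y - 0 := by rw [htel, hA]
        _ = (p : ℝ) • y := sub_zero _
    have hp0 : (p : ℝ) ≠ 0 := Nat.cast_ne_zero.mpr hp.pos.ne'
    set w : Fin d → ℝ := (p : ℝ)⁻¹ • S with hw
    have hwkey : SD.act zr ρ h w - w = y := by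
      rw [hw, act_smul, ← smul_sub, hkey, smul_smul, inv_mul_cancel₀ hp0, one_smul]
    refine hcob (Subgroup.zpowers h) ?_ ?_
    · rw [Nat.card_zpowers, horderh]; exact hp
    · refine ⟨mkT zr w, ?_⟩
      intro h' hh'
      obtain ⟨n, rfl⟩ := mem_powers_iff_mem_zpowers.mpr hh'
      clear hh'
      have base : f h = torusMap zr ((ρ h : Matrix (Fin d) (Fin d) ℤ)) (mkT zr w)
          - mkT zr w := by
        rw [← hmem', ← hwkey, map_sub]
        rfl
      induction n with
      | zero =>
        show f (h ^ 0) = torusMap zr ((ρ (h ^ 0) : Matrix (Fin d) (Fin d) ℤ)) (mkT zr w)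
          - mkT zr w
        rw [pow_zero, cocycle_map_one zr ρ hf, _root_.map_one]
        have h1 : ((1 : Matrix.GeneralLinearGroup (Fin d) ℤ) : Matrix (Fin d) (Fin d) ℤ) = 1 :=
          Units.val_one
        rw [h1, torusMap_one, sub_self]
      | succ n ih =>
        show f (h ^ (n + 1)) = torusMap zr ((ρ (h ^ (n + 1)) : Matrix (Fin d) (Fin d) ℤ))
          (mkT zr w) - mkT zr w
        rw [pow_succ', hf h (h ^ n), ih, base, map_sub]
        have hmul : torusMap zr ((ρ (h * h ^ n) : Matrix (Fin d) (Fin d) ℤ)) (mkT zr w)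
            = torusMap zr ((ρ h : Matrix (Fin d) (Fin d) ℤ))
              (torusMap zr ((ρ (h ^ n) : Matrix (Fin d) (Fin d) ℤ)) (mkT zr w)) := by
          rw [_root_.map_mul ρ h (h ^ n), Units.val_mul, torusMap_mul']
        rw [hmul]
        abel

end GenCrys
end

section
/- Let G be a finite group, ρ : G → GL(d, ℤ) a homomorphism, and v ∈ ℤ^d a vector with ρ(g)·v = v for all g ∈ G. Suppose ℤ^d = ℤv ⊕ M' for some ℤ-submodule M' of ℤ^d, and let b ∈ G be such that ρ(b) maps the ℝ-linear span of M' into itself. Then for every integer q ≥ 2 and every z ∈ ℝ^d, one has (1/q)·v + ℤ^d ≠ ρ(b)·z − z + ℤ^d in ℝ^d/ℤ^d. In particular, any 1-cocycle f of ⟨b⟩ with f(b) = (1/q)·v + ℤ^d is not a 1-coboundary of ⟨b⟩. -/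
open Matrix

namespace GenCrys

/-- The coordinatewise embedding `ℤ^d → ℝ^d`. -/
def vecR {d : ℕ} (w : Fin d → ℤ) : Fin d → ℝ := fun i => (w i : ℝ)

/-- Suppose `v ∈ ℤ^d` is a nonzero vector fixed by all `ρ(g)`, `ℤ^d = ℤv ⊕ M'`, and `ρ(b)`
maps the real span of `M'` into itself.  Then for every `q ≥ 2`, the class of `(1/q)·v` in
`ℝ^d/ℤ^d` is not of the form `b•z - z`; in particular a 1-cocycle taking the value
`(1/q)·v + ℤ^d` at `b` is not a coboundary of `⟨b⟩`. -/
theorem frac_fixed_vector_not_coboundary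
    (G : Type) [Group G] [Finite G] (d : ℕ)
    (ρ : G →* Matrix.GeneralLinearGroup (Fin d) ℤ)
    (v : Fin d → ℤ) (hv0 : v ≠ 0)
    (hv : ∀ g : G, (ρ g : Matrix (Fin d) (Fin d) ℤ).mulVec v = v)
    (M' : Submodule ℤ (Fin d → ℤ))
    (hsup : Submodule.span ℤ {v} ⊔ M' = ⊤)
    (hinf : Submodule.span ℤ {v} ⊓ M' = ⊥)
    (b : G)
    (hb : ∀ x ∈ Submodule.span ℝ (vecR '' (M' : Set (Fin d → ℤ))),
        SD.act zr ρ b x ∈ Submodule.span ℝ (vecR '' (M' : Set (Fin d → ℤ))))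
    (q : ℕ) (hq : 2 ≤ q) :
    (∀ z : Fin d → ℝ,
        mkT zr (fun i => (q : ℝ)⁻¹ * (v i : ℝ)) ≠ mkT zr (SD.act zr ρ b z - z)) ∧
    (∀ f : G → Torus zr d, f b = mkT zr (fun i => (q : ℝ)⁻¹ * (v i : ℝ)) →
        ¬ IsCoboundaryOn zr ρ f (Subgroup.zpowers b)) := by
  classical
  -- the complement structure over ℤ
  have hcompl : IsCompl (Submodule.span ℤ {v}) M' :=
    ⟨disjoint_iff.mpr hinf, codisjoint_iff.mpr hsup⟩
  set proj : (Fin d → ℤ) →ₗ[ℤ] (Submodule.span ℤ ({v} : Set (Fin d → ℤ))) :=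
    Submodule.projectionOnto _ _ hcompl with hproj
  set μ : (Submodule.span ℤ ({v} : Set (Fin d → ℤ))) ≃ₗ[ℤ] ℤ :=
    (LinearEquiv.toSpanNonzeroSingleton ℤ (Fin d → ℤ) v hv0).symm with hμ
  set lam : (Fin d → ℤ) →ₗ[ℤ] ℤ := μ.toLinearMap.comp proj with hlam
  have hvmem : v ∈ Submodule.span ℤ ({v} : Set (Fin d → ℤ)) :=
    Submodule.mem_span_singleton_self v
  have hlamv : lam v = 1 := by
    have h1 : proj v = ⟨v, hvmem⟩ := by
      have := Submodule.projectionOnto_apply_left hcompl (⟨v, hvmem⟩ :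
        Submodule.span ℤ ({v} : Set (Fin d → ℤ)))
      simpa [hproj] using this
    have h2 : μ ⟨v, hvmem⟩ = 1 := by
      rw [hμ, LinearEquiv.symm_apply_eq]
      exact (LinearEquiv.toSpanNonzeroSingleton_one ℤ (Fin d → ℤ) v hv0).symm
    simp [hlam, h1, h2]
  have hlamM : ∀ m ∈ M', lam m = 0 := by
    intro m hm
    simp [hlam, hproj, Submodule.projectionOnto_apply_of_mem_right hcompl hm]
  -- the real functional π
  set π : (Fin d → ℝ) →ₗ[ℝ] ℝ :=
    { toFun := fun x => ∑ i, x i * (lam (Pi.single i 1) : ℝ)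
      map_add' := by
        intro x y
        simp [add_mul, Finset.sum_add_distrib]
      map_smul' := by
        intro a x
        simp [Finset.mul_sum, mul_assoc] } with hπdef
  have hπint : ∀ w : Fin d → ℤ, π (vecR w) = (lam w : ℝ) := by
    intro w
    have hw : w = ∑ i, w i • Pi.single i (1 : ℤ) := by
      conv_lhs => rw [← Finset.univ_sum_single w]
      refine Finset.sum_congr rfl fun i _ => ?_
      ext j
      by_cases h : j = i <;> simp [Pi.single_apply, h]
    have hlw : lam w = ∑ i, w i * lam (Pi.single i 1) := by
      conv_lhs => rw [hw]
      rw [map_sum]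
      exact Finset.sum_congr rfl fun i _ => by rw [LinearMap.map_smul, smul_eq_mul]
    rw [hlw]
    show ∑ i, (w i : ℝ) * (lam (Pi.single i 1) : ℝ) = _
    push_cast
    rfl
  have hπW : ∀ x ∈ Submodule.span ℝ (vecR '' (M' : Set (Fin d → ℤ))), π x = 0 := by
    intro x hx
    have hsub : vecR '' (M' : Set (Fin d → ℤ)) ⊆ (LinearMap.ker π : Set (Fin d → ℝ)) := by
      rintro _ ⟨m, hm, rfl⟩
      simp only [SetLike.mem_coe, LinearMap.mem_ker]
      rw [hπint m, hlamM m hm]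
      norm_num
    exact LinearMap.mem_ker.mp (Submodule.span_le.mpr hsub hx)
  -- cast of mulVec
  have castMulVec : ∀ (M : Matrix (Fin d) (Fin d) ℤ) (w : Fin d → ℤ),
      (M.map (zr : ℤ → ℝ)).mulVec (vecR w) = vecR (M.mulVec w) := by
    intro M w
    ext i
    simp [Matrix.mulVec, dotProduct, vecR, Matrix.map_apply]
  have hactv : SD.act zr ρ b (vecR v) = vecR v := by
    show ((ρ b : Matrix (Fin d) (Fin d) ℤ).map (zr : ℤ → ℝ)).mulVec (vecR v) = vecR v
    rw [castMulVec, hv b]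
  -- decomposition of ℝ^d
  have hvecR_single : ∀ i : Fin d, vecR (Pi.single i (1 : ℤ)) = Pi.single i (1 : ℝ) := by
    intro i
    ext j
    by_cases h : j = i <;> simp [vecR, Pi.single_apply, h]
  have hTopSup : Submodule.span ℝ ({vecR v} : Set (Fin d → ℝ)) ⊔
      Submodule.span ℝ (vecR '' (M' : Set (Fin d → ℤ))) = ⊤ := by
    rw [eq_top_iff]
    intro x _
    have hx : x = ∑ i, x i • (Pi.single i (1 : ℝ) : Fin d → ℝ) := by
      conv_lhs => rw [← Finset.univ_sum_single x]
      refine Finset.sum_congr rfl fun i _ => ?_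
      ext j
      by_cases h : j = i <;> simp [Pi.single_apply, h]
    rw [hx]
    refine Submodule.sum_mem _ fun i _ => Submodule.smul_mem _ _ ?_
    have hei : Pi.single i (1 : ℤ) ∈ Submodule.span ℤ ({v} : Set (Fin d → ℤ)) ⊔ M' := by
      rw [hsup]; trivial
    obtain ⟨a, ha, m, hm, hsum⟩ := Submodule.mem_sup.mp hei
    obtain ⟨n, rfl⟩ := Submodule.mem_span_singleton.mp ha
    have : Pi.single i (1 : ℝ) = (n : ℝ) • vecR v + vecR m := by
      rw [← hvecR_single i, ← hsum]
      ext j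
      simp [vecR]
    rw [this]
    refine Submodule.add_mem _ ?_ ?_
    · exact Submodule.mem_sup_left (Submodule.smul_mem _ _
        (Submodule.mem_span_singleton_self _))
    · exact Submodule.mem_sup_right (Submodule.subset_span ⟨m, hm, rfl⟩)
  have hdecomp : ∀ z : Fin d → ℝ, ∃ α : ℝ,
      ∃ w ∈ Submodule.span ℝ (vecR '' (M' : Set (Fin d → ℤ))), z = α • vecR v + w := by
    intro z
    have hz : z ∈ Submodule.span ℝ ({vecR v} : Set (Fin d → ℝ)) ⊔
        Submodule.span ℝ (vecR '' (M' : Set (Fin d → ℤ))) := by rw [hTopSup]; trivial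
    obtain ⟨a, ha, w, hw, hsum⟩ := Submodule.mem_sup.mp hz
    obtain ⟨α, rfl⟩ := Submodule.mem_span_singleton.mp ha
    exact ⟨α, w, hw, hsum.symm⟩
  -- act is additive / smul compatible
  have hact_smul : ∀ (g : G) (a : ℝ) (x : Fin d → ℝ),
      SD.act zr ρ g (a • x) = a • SD.act zr ρ g x := fun g a x => Matrix.mulVec_smul _ a x
  -- main part 1
  have part1 : ∀ z : Fin d → ℝ,
      mkT zr (fun i => (q : ℝ)⁻¹ * (v i : ℝ)) ≠ mkT zr (SD.act zr ρ b z - z) := by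
    intro z heq
    obtain ⟨n', hn'mem, hn'⟩ := (QuotientAddGroup.mk'_eq_mk' _).mp heq
    choose w hw using hn'mem
    have hnvec : n' = vecR w := funext hw
    -- π of the left side
    have hu : (fun i => (q : ℝ)⁻¹ * (v i : ℝ)) = (q : ℝ)⁻¹ • vecR v := by
      ext i; simp [vecR]
    have hπu : π (fun i => (q : ℝ)⁻¹ * (v i : ℝ)) = (q : ℝ)⁻¹ := by
      rw [hu, LinearMap.map_smul, hπint v, hlamv]
      simp
    -- π of the right side
    obtain ⟨α, w', hw', hzdec⟩ := hdecomp z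
    have hactz : SD.act zr ρ b z - z = SD.act zr ρ b w' - w' := by
      rw [hzdec, SD.act_add, hact_smul, hactv]
      abel
    have hπr : π (SD.act zr ρ b z - z) = 0 := by
      rw [hactz, map_sub, hπW _ (hb w' hw'), hπW _ hw']
      ring
    -- combine
    have hcomb : (q : ℝ)⁻¹ + (lam w : ℝ) = 0 := by
      have := congrArg π hn'
      rw [map_add, hπu, hnvec, hπint w, hπr] at this
      exact this
    have h1 : ((-lam w : ℤ) : ℝ) = (q : ℝ)⁻¹ := by push_cast; linarith
    have hq1 : (1 : ℝ) < (q : ℝ) := by exact_mod_cast Nat.lt_of_lt_of_le one_lt_two hq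
    have hq0 : (0 : ℝ) < (q : ℝ)⁻¹ := inv_pos.mpr (lt_trans one_pos hq1)
    have hlt1 : (q : ℝ)⁻¹ < 1 := by
      rw [inv_lt_one_iff₀]; right; exact hq1
    have hn0 : (0 : ℤ) < -lam w := by
      have : (0 : ℝ) < ((-lam w : ℤ) : ℝ) := h1 ▸ hq0
      exact_mod_cast this
    have hge1 : (1 : ℝ) ≤ ((-lam w : ℤ) : ℝ) := by exact_mod_cast hn0
    rw [h1] at hge1
    linarith
  refine ⟨part1, ?_⟩
  intro f hf ⟨Z, hZ⟩
  obtain ⟨z, rfl⟩ := QuotientAddGroup.mk'_surjective (latt zr d) Z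
  have hb' := hZ b (Subgroup.mem_zpowers b)
  rw [hf] at hb'
  refine part1 z ?_
  rw [hb']
  show torusMap zr _ (mkT zr z) - mkT zr z = _
  rw [torusMap_mk, ← map_sub]
  rfl

end GenCrys
end

section
/- Let p > 2 be a prime and G = ⟨a, b⟩ ≅ C_p × C_p. Then Γ₀ is a faithful indecomposable ℤ-representation of G of degree p²: the map g ↦ Γ₀(g) is an injective homomorphism G → GL(p², ℤ), and the ℤ[G]-module ℤ^{p²} (with g acting as Γ₀(g)) is not the direct sum of two nonzero ℤ[G]-submodules. -/
namespace CpCp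

/-- The matrix `ε̃` of multiplication by the primitive `p`-th root of unity `ε` on the ring
`ℤ[ε]` with respect to the `ℤ`-basis `{1, ε, …, ε^{p-2}}`. -/
def eps (p : ℕ) : Matrix (Fin (p - 1)) (Fin (p - 1)) ℤ :=
  Matrix.of fun x y =>
    if (y : ℕ) + 2 < p then (if (x : ℕ) = (y : ℕ) + 1 then 1 else 0) else -1

/-- The entry function of the matrix `ε̃^k` (entries outside the range `p - 1` are zero). -/
def epsE (p k : ℕ) (x y : ℕ) : ℤ :=
  if hx : x < p - 1 then if hy : y < p - 1 then (eps p ^ k) ⟨x, hx⟩ ⟨y, hy⟩ else 0 else 0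

/-- Exponents for `Γ₀(a)` on the diagonal of `τ = ρ_{p-1} ⊕ ⋯ ⊕ ρ₂ ⊕ γ₃ ⊕ γ₂ ⊕ γ₁`:
the `k`-th block of `τ(a)` is `ε̃^(ea p k)`. -/
def ea (p k : ℕ) : ℕ := if k = p then 0 else 1

/-- Exponents for `Γ₀(b)`: the `k`-th block of `τ(b)` is `ε̃^(eb p k)`. -/
def eb (p k : ℕ) : ℕ := if k = p then 1 else p - 1 - k

/-- The `k`-th block (`k = 0, …, p`) of the intertwining column `U(a)`: `⟨1⟩` for `k ≤ p-1`
and `0` for `k = p`. -/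
def Ua (p k t : ℕ) : ℤ := if k ≤ p - 1 ∧ t = 0 then 1 else 0

/-- The `k`-th block of the intertwining column `U(b)`: the coordinate column `⟨α_{k+1}⟩` of
`α_{k+1} = (ε^{p-k-1} - 1)/(ε - 1) = 1 + ε + ⋯ + ε^{p-k-2}` for `k ≤ p-1`, and `⟨1⟩` for
`k = p`. -/
def Ub (p k t : ℕ) : ℤ :=
  if k = p then (if t = 0 then 1 else 0) else if t + k + 1 < p then 1 else 0

/-- A generic matrix of the shape of `Γ₀(g) = [[τ(g), U(g)], [0, γ₀(g)]]`, where the `k`-th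
diagonal block of `τ(g)` is `ε̃^(e k)` and the `k`-th block of the column `U(g)` is
`U k : ℤ^{p-1}`. -/
def Gamma0 (p : ℕ) (e : ℕ → ℕ) (U : ℕ → ℕ → ℤ) : Matrix (Fin (p ^ 2)) (Fin (p ^ 2)) ℤ :=
  Matrix.of fun x y =>
    if (x : ℕ) / (p - 1) = p + 1 then (if (y : ℕ) / (p - 1) = p + 1 then 1 else 0)
    else if (y : ℕ) / (p - 1) = p + 1 then U ((x : ℕ) / (p - 1)) ((x : ℕ) % (p - 1))
    else if (x : ℕ) / (p - 1) = (y : ℕ) / (p - 1) then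
      epsE p (e ((x : ℕ) / (p - 1))) ((x : ℕ) % (p - 1)) ((y : ℕ) % (p - 1))
    else 0

/-- The matrix `Γ₀(a)`. -/
def Gamma0a (p : ℕ) : Matrix (Fin (p ^ 2)) (Fin (p ^ 2)) ℤ := Gamma0 p (ea p) (Ua p)

/-- The matrix `Γ₀(b)`. -/
def Gamma0b (p : ℕ) : Matrix (Fin (p ^ 2)) (Fin (p ^ 2)) ℤ := Gamma0 p (eb p) (Ub p)


open Polynomial Finset

variable {p : ℕ}

noncomputable def Phi (p : ℕ) : ℤ[X] := ∑ i ∈ Finset.range p, X ^ i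

def sing (p : ℕ) (j : ℕ) : Fin (p - 1) → ℤ := fun i => if (i : ℕ) = j then 1 else 0

def cvec (p : ℕ) (r : ℤ[X]) : Fin (p - 1) → ℤ := fun i => r.coeff i

lemma Phi_eq (hp : p.Prime) : Phi p = cyclotomic p ℤ := by
  haveI := Fact.mk hp
  rw [cyclotomic_prime]; rfl

lemma Phi_monic (hp : p.Prime) : (Phi p).Monic := by
  rw [Phi_eq hp]; exact cyclotomic.monic p ℤ

lemma Phi_natDegree (hp : p.Prime) : (Phi p).natDegree = p - 1 := by
  rw [Phi_eq hp, natDegree_cyclotomic, Nat.totient_prime hp]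

lemma Phi_degree (hp : p.Prime) : (Phi p).degree = ((p - 1 : ℕ) : WithBot ℕ) := by
  rw [degree_eq_natDegree (Phi_monic hp).ne_zero, Phi_natDegree hp]

lemma Phi_coeff (i : ℕ) : (Phi p).coeff i = if i < p then 1 else 0 := by
  simp only [Phi, finset_sum_coeff, coeff_X_pow]
  rw [Finset.sum_ite_eq (Finset.range p) i (fun _ => (1:ℤ))]
  simp [Finset.mem_range]

lemma Phi_prime (hp : p.Prime) : Prime (Phi p) := by
  rw [Phi_eq hp]
  exact UniqueFactorizationMonoid.irreducible_iff_prime.mp (cyclotomic.irreducible hp.pos)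

/-- The basic action formula for `eps` on a vector. -/
lemma eps_mulVec (h2 : 2 < p) (v : Fin (p - 1) → ℤ) (i : Fin (p - 1)) :
    (eps p).mulVec v i =
      (if 0 < (i : ℕ) then v ⟨(i : ℕ) - 1, lt_of_le_of_lt (Nat.sub_le _ _) i.isLt⟩ else 0)
        - v ⟨p - 2, by omega⟩ := by
  have key : ∀ y : Fin (p - 1),
      eps p i y * v y =
        (if (y : ℕ) = (i : ℕ) - 1 ∧ 0 < (i : ℕ) then v y else 0)
          + (if (y : ℕ) = p - 2 then -v y else 0) := by
    intro y
    have hy := y.isLt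
    have hi := i.isLt
    simp only [eps, Matrix.of_apply]
    split_ifs with h1 h2' h3 h4 h3 h4 <;> (try omega) <;> ring
  simp only [Matrix.mulVec, dotProduct]
  rw [Finset.sum_congr rfl (fun y _ => key y), Finset.sum_add_distrib]
  have s1 : (∑ y : Fin (p-1), if (y : ℕ) = (i : ℕ) - 1 ∧ 0 < (i : ℕ) then v y else 0)
      = (if 0 < (i : ℕ) then v ⟨(i : ℕ) - 1, lt_of_le_of_lt (Nat.sub_le _ _) i.isLt⟩ else 0) := by
    by_cases hi : 0 < (i : ℕ)
    · rw [if_pos hi]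
      rw [Finset.sum_eq_single (⟨(i : ℕ) - 1, lt_of_le_of_lt (Nat.sub_le _ _) i.isLt⟩ : Fin (p-1))]
      · simp [hi]
      · intro b _ hb
        have : ¬((b : ℕ) = (i : ℕ) - 1 ∧ 0 < (i : ℕ)) := by
          intro ⟨h', _⟩; exact hb (Fin.ext h')
        simp [this]
      · intro h; exact absurd (Finset.mem_univ _) h
    · rw [if_neg hi]
      exact Finset.sum_eq_zero (fun b _ => by simp [hi])
  have s2 : (∑ y : Fin (p-1), if (y : ℕ) = p - 2 then -v y else 0)
      = -v ⟨p - 2, by omega⟩ := by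
    rw [Finset.sum_eq_single (⟨p - 2, by omega⟩ : Fin (p-1))]
    · simp
    · intro b _ hb
      have : ¬((b : ℕ) = p - 2) := fun h' => hb (Fin.ext h')
      simp [this]
    · intro h; exact absurd (Finset.mem_univ _) h
  rw [s1, s2]; exact (sub_eq_add_neg _ _).symm

/-- congruence mod `Phi` gives equal remainders. -/
lemma modByMonic_congr (hp : p.Prime) {f g : ℤ[X]} (h : Phi p ∣ f - g) :
    f %ₘ Phi p = g %ₘ Phi p := by
  have : (f - g) %ₘ Phi p = 0 := (modByMonic_eq_zero_iff_dvd (Phi_monic hp)).mpr h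
  have h2 := sub_modByMonic f g (Phi p)
  rw [this] at h2
  exact sub_eq_zero.mp h2.symm

lemma modByMonic_small (hp : p.Prime) {f : ℤ[X]} (hf : f.degree < ((p - 1 : ℕ) : WithBot ℕ)) :
    f %ₘ Phi p = f := by
  rw [modByMonic_eq_self_iff (Phi_monic hp), Phi_degree hp]; exact hf

/-- The key shift formula: multiplying by `eps` corresponds to `·X mod Phi`. -/
lemma eps_mulVec_cvec (hp : p.Prime) (h2 : 2 < p) (r : ℤ[X])
    (hr : r.degree < ((p - 1 : ℕ) : WithBot ℕ)) :
    (eps p).mulVec (cvec p r) = cvec p ((X * r) %ₘ Phi p) := by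
  set c := r.coeff (p - 2) with hc
  have hmod : (X * r) %ₘ Phi p = X * r - C c * Phi p := by
    have hd : (X * r - C c * Phi p).degree < ((p - 1 : ℕ) : WithBot ℕ) := by
      rw [degree_lt_iff_coeff_zero]
      intro m hm
      rcases Nat.exists_eq_add_of_le hm with ⟨d, rfl⟩
      have hx : (X * r).coeff (p - 1 + d) = r.coeff (p - 2 + d) := by
        have : p - 1 + d = (p - 2 + d) + 1 := by omega
        rw [this, coeff_X_mul]
      rw [coeff_sub, hx, coeff_C_mul, Phi_coeff]
      rcases Nat.eq_zero_or_pos d with hd0 | hd0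
      · subst hd0
        simp only [add_zero]
        rw [if_pos (by omega)]
        simp [hc]
      · have : r.coeff (p - 2 + d) = 0 := by
          apply coeff_eq_zero_of_degree_lt
          have hle0 : (p - 1 : ℕ) ≤ p - 2 + d := by omega
          have hle : ((p - 1 : ℕ) : WithBot ℕ) ≤ ((p - 2 + d : ℕ) : WithBot ℕ) := by
            exact_mod_cast hle0
          exact lt_of_lt_of_le hr hle
        rw [this, if_neg (by omega)]
        ring
    have : X * r - (X * r - C c * Phi p) = C c * Phi p := by ring
    calc (X * r) %ₘ Phi p = (X * r - C c * Phi p) %ₘ Phi p :=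
          modByMonic_congr hp (by rw [this]; exact Dvd.intro _ (mul_comm _ _))
      _ = X * r - C c * Phi p := modByMonic_small hp hd
  rw [hmod]
  funext i
  rw [eps_mulVec h2]
  simp only [cvec, coeff_sub, coeff_C_mul, Phi_coeff]
  have hi := i.isLt
  rw [if_pos (show (i:ℕ) < p by omega)]
  have hxr : (X * r).coeff i = if 0 < (i:ℕ) then r.coeff ((i:ℕ) - 1) else 0 := by
    by_cases h0 : 0 < (i:ℕ)
    · rcases Nat.exists_eq_succ_of_ne_zero (by omega : (i:ℕ) ≠ 0) with ⟨m, hm⟩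
      rw [if_pos h0, hm, coeff_X_mul]
      congr 1
    · rw [if_neg h0]
      have : (i : ℕ) = 0 := by omega
      rw [this, mul_comm, coeff_mul_X_zero]
  rw [hxr, mul_one]

lemma mulVec_sing (M : Matrix (Fin (p-1)) (Fin (p-1)) ℤ) (j : Fin (p-1)) :
    M.mulVec (sing p (j : ℕ)) = fun i => M i j := by
  funext i
  simp only [Matrix.mulVec, dotProduct, sing]
  rw [Finset.sum_eq_single j]
  · simp
  · intro b _ hb
    rw [if_neg (fun h => hb (Fin.ext h)), mul_zero]
  · intro h; exact absurd (Finset.mem_univ _) h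

lemma matrix_ext_sing {M N : Matrix (Fin (p-1)) (Fin (p-1)) ℤ}
    (h : ∀ j : Fin (p-1), M.mulVec (sing p (j : ℕ)) = N.mulVec (sing p (j : ℕ))) : M = N := by
  ext i j
  have := congrFun (h j) i
  rwa [mulVec_sing, mulVec_sing] at this

lemma cvec_of_small (hp : p.Prime) {f : ℤ[X]} (hf : f.degree < ((p - 1 : ℕ) : WithBot ℕ)) :
    cvec p (f %ₘ Phi p) = cvec p f := by rw [modByMonic_small hp hf]

/-- `eps^n` applied to the basis vector `e₀` gives the coefficient vector of `X^n mod Phi`. -/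
lemma eps_pow_mulVec_e0 (hp : p.Prime) (h2 : 2 < p) (n : ℕ) :
    (eps p ^ n).mulVec (sing p 0) = cvec p ((X ^ n : ℤ[X]) %ₘ Phi p) := by
  induction n with
  | zero =>
    rw [pow_zero, Matrix.one_mulVec, pow_zero,
      modByMonic_small hp (by rw [degree_one]; exact_mod_cast WithBot.coe_lt_coe.mpr (by omega))]
    funext i
    simp only [cvec, coeff_one, sing]
  | succ n ih =>
    rw [pow_succ', ← Matrix.mulVec_mulVec, ih,
      eps_mulVec_cvec hp h2 _ (degree_modByMonic_lt _ (Phi_monic hp) |>.trans_eq (Phi_degree hp))]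
    refine congrArg (cvec p) (modByMonic_congr hp ?_)
    have hid : X * (X ^ n %ₘ Phi p) - X ^ (n+1) = -(X * (Phi p * (X ^ n /ₘ Phi p))) := by
      have h := modByMonic_add_div (X ^ n : ℤ[X]) (Phi p)
      linear_combination (X : ℤ[X]) * h
    rw [hid]
    exact (dvd_mul_of_dvd_right (Dvd.intro _ rfl) X).neg_right

lemma aeval_mulVec (hp : p.Prime) (h2 : 2 < p) (f : ℤ[X]) :
    (aeval (eps p) f).mulVec (sing p 0) = cvec p (f %ₘ Phi p) := by
  induction f using Polynomial.induction_on' with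
  | add f g hf hg =>
    rw [map_add, Matrix.add_mulVec, hf, hg, add_modByMonic]
    funext i
    simp [cvec]
  | monomial n a =>
    rw [← smul_X_eq_monomial, map_smul, map_pow, aeval_X, Matrix.smul_mulVec,
      eps_pow_mulVec_e0 hp h2, smul_modByMonic]
    funext i
    simp [cvec]

lemma sing_eq_pow_e0 (hp : p.Prime) (h2 : 2 < p) {j : ℕ} (hj : j < p - 1) :
    sing p j = (eps p ^ j).mulVec (sing p 0) := by
  rw [eps_pow_mulVec_e0 hp h2,
    modByMonic_small hp (by rw [degree_X_pow]; exact_mod_cast WithBot.coe_lt_coe.mpr hj)]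
  funext i
  simp only [sing, cvec, coeff_X_pow]

/-- Two matrices commuting with `eps` that agree on `e₀` are equal. -/
lemma eq_of_commute_e0 (hp : p.Prime) (h2 : 2 < p)
    {M N : Matrix (Fin (p-1)) (Fin (p-1)) ℤ}
    (hM : M * eps p = eps p * M) (hN : N * eps p = eps p * N)
    (h0 : M.mulVec (sing p 0) = N.mulVec (sing p 0)) : M = N := by
  apply matrix_ext_sing
  intro j
  have cM : M * eps p ^ (j:ℕ) = eps p ^ (j:ℕ) * M := (Commute.pow_right hM (j:ℕ))
  have cN : N * eps p ^ (j:ℕ) = eps p ^ (j:ℕ) * N := (Commute.pow_right hN (j:ℕ))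
  rw [sing_eq_pow_e0 hp h2 j.isLt, Matrix.mulVec_mulVec, Matrix.mulVec_mulVec, cM, cN,
    ← Matrix.mulVec_mulVec, ← Matrix.mulVec_mulVec, h0]

lemma aeval_Phi (hp : p.Prime) (h2 : 2 < p) : aeval (eps p) (Phi p) = 0 := by
  have hcom : aeval (eps p) (Phi p) * eps p = eps p * aeval (eps p) (Phi p) := by
    have t1 : aeval (eps p) (Phi p * X) = aeval (eps p) (Phi p) * eps p := by
      rw [map_mul, aeval_X]
    have t2 : aeval (eps p) (X * Phi p) = eps p * aeval (eps p) (Phi p) := by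
      rw [map_mul, aeval_X]
    rw [← t1, ← t2, mul_comm]
  apply eq_of_commute_e0 hp h2 hcom (by simp)
  rw [aeval_mulVec hp h2, (modByMonic_eq_zero_iff_dvd (Phi_monic hp)).mpr dvd_rfl]
  funext i
  simp [cvec, Matrix.zero_mulVec]

lemma aeval_eps_eq_zero_iff (hp : p.Prime) (h2 : 2 < p) (f : ℤ[X]) :
    aeval (eps p) f = 0 ↔ Phi p ∣ f := by
  constructor
  · intro h
    have hdecomp := modByMonic_add_div f (Phi p)
    have : aeval (eps p) (f %ₘ Phi p) = 0 := by
      have := congrArg (aeval (eps p)) hdecomp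
      rw [map_add, map_mul, aeval_Phi hp h2, zero_mul, add_zero, h] at this
      exact this
    have hcv : cvec p (f %ₘ Phi p) = 0 := by
      have h0 := congrArg (fun M => Matrix.mulVec M (sing p 0)) this
      simp only [Matrix.zero_mulVec] at h0
      rw [aeval_mulVec hp h2] at h0
      rwa [modByMonic_small hp ((degree_modByMonic_lt f (Phi_monic hp)).trans_eq (Phi_degree hp))] at h0
    rw [← modByMonic_eq_zero_iff_dvd (Phi_monic hp)]
    have hdeg := degree_modByMonic_lt f (Phi_monic hp)
    rw [Phi_degree hp] at hdeg
    apply Polynomial.ext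
    intro m
    by_cases hm : m < p - 1
    · have := congrFun hcv ⟨m, hm⟩
      simpa [cvec] using this
    · rw [coeff_zero]
      have hle0 : (p - 1 : ℕ) ≤ m := by omega
      have hle : ((p - 1 : ℕ) : WithBot ℕ) ≤ (m : WithBot ℕ) := by exact_mod_cast hle0
      exact coeff_eq_zero_of_degree_lt (lt_of_lt_of_le hdeg hle)
  · rintro ⟨g, rfl⟩
    rw [map_mul, aeval_Phi hp h2, zero_mul]

lemma eps_pow_p (hp : p.Prime) (h2 : 2 < p) : eps p ^ p = 1 := by
  have hdvd : Phi p ∣ (X ^ p - 1 : ℤ[X]) := by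
    refine ⟨X - 1, ?_⟩
    have := geom_sum_mul (X : ℤ[X]) p
    rw [← this]; rfl
  have := (aeval_eps_eq_zero_iff hp h2 (X ^ p - 1)).mpr hdvd
  rw [map_sub, map_pow, aeval_X, map_one, sub_eq_zero] at this
  exact this

lemma eps_pow_mod (hp : p.Prime) (h2 : 2 < p) (m : ℕ) : eps p ^ m = eps p ^ (m % p) := by
  conv_lhs => rw [← Nat.div_add_mod m p]
  rw [pow_add, pow_mul, eps_pow_p hp h2, one_pow, one_mul]

lemma eps_ne_one (h2 : 2 < p) : eps p ≠ 1 := by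
  intro h
  have := congrFun (congrFun h ⟨0, by omega⟩) ⟨0, by omega⟩
  simp only [eps, Matrix.of_apply] at this
  rw [if_pos (by omega : (0:ℕ) + 2 < p), if_neg (by omega), Matrix.one_apply_eq] at this
  exact absurd this (by norm_num)

lemma eps_pow_eq_one_iff (hp : p.Prime) (h2 : 2 < p) (j : ℕ) :
    eps p ^ j = 1 ↔ p ∣ j := by
  have hord : orderOf (eps p) = p := by
    have hdvd : orderOf (eps p) ∣ p := orderOf_dvd_of_pow_eq_one (eps_pow_p hp h2)
    rcases (Nat.Prime.eq_one_or_self_of_dvd hp _ hdvd) with h1 | h1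
    · exact absurd (orderOf_eq_one_iff.mp h1) (eps_ne_one h2)
    · exact h1
  constructor
  · intro h
    exact hord ▸ orderOf_dvd_of_pow_eq_one h
  · intro h
    exact orderOf_dvd_iff_pow_eq_one.mp (hord.symm ▸ h)

/-- Every matrix commuting with `eps` is an integer polynomial in `eps`. -/
lemma commutant (hp : p.Prime) (h2 : 2 < p) {M : Matrix (Fin (p-1)) (Fin (p-1)) ℤ}
    (hM : M * eps p = eps p * M) : ∃ f : ℤ[X], M = aeval (eps p) f := by
  refine ⟨∑ i : Fin (p-1), C (M i ⟨0, by omega⟩) * X ^ (i:ℕ), ?_⟩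
  set f : ℤ[X] := ∑ i : Fin (p-1), C (M i ⟨0, by omega⟩) * X ^ (i:ℕ) with hf
  have hcoeff : ∀ m : ℕ, f.coeff m = if hm : m < p - 1 then M ⟨m, hm⟩ ⟨0, by omega⟩ else 0 := by
    intro m
    rw [hf, finset_sum_coeff]
    simp only [coeff_C_mul, coeff_X_pow]
    split_ifs with hm
    · rw [Finset.sum_eq_single (⟨m, hm⟩ : Fin (p-1))]
      · simp
      · intro b _ hb
        rw [if_neg (fun h => hb (Fin.ext h.symm)), mul_zero]
      · intro h; exact absurd (Finset.mem_univ _) h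
    · apply Finset.sum_eq_zero
      intro b _
      rw [if_neg (by intro h; rw [h] at hm; exact hm b.isLt), mul_zero]
  have hdeg : f.degree < ((p - 1 : ℕ) : WithBot ℕ) := by
    rw [degree_lt_iff_coeff_zero]
    intro m hm
    rw [hcoeff m, dif_neg (by omega)]
  have hNcom : aeval (eps p) f * eps p = eps p * aeval (eps p) f := by
    have t1 : aeval (eps p) (f * X) = aeval (eps p) f * eps p := by rw [map_mul, aeval_X]
    have t2 : aeval (eps p) (X * f) = eps p * aeval (eps p) f := by rw [map_mul, aeval_X]
    rw [← t1, ← t2, mul_comm]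
  refine eq_of_commute_e0 hp h2 hM hNcom ?_
  rw [aeval_mulVec hp h2, modByMonic_small hp hdeg]
  have := mulVec_sing M ⟨0, by omega⟩
  rw [show ((⟨0, by omega⟩ : Fin (p-1)) : ℕ) = 0 from rfl] at this
  rw [this]
  funext i
  rw [show (cvec p f) i = f.coeff i from rfl, hcoeff i, dif_pos i.isLt]

lemma telescope {R : Type*} [Ring R] (y : R) (m : ℕ) :
    (y - 1) * ∑ j ∈ Finset.range m, (j : ℤ) • y ^ j
      = ((m : ℤ) - 1) • y ^ m - (∑ j ∈ Finset.range m, y ^ j) + 1 := by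
  induction m with
  | zero => simp
  | succ m ih =>
    rw [Finset.sum_range_succ, Finset.sum_range_succ (f := fun j => y ^ j), mul_add, ih]
    have expand : (y - 1) * ((m:ℤ) • y ^ m) = (m:ℤ) • y ^ (m+1) - (m:ℤ) • y ^ m := by
      rw [sub_mul, one_mul, mul_smul_comm, ← pow_succ']
    rw [expand]
    push_cast
    have h1 : ((m:ℤ) + 1 - 1) • y ^ (m+1) = (m:ℤ) • y ^ (m+1) := by ring_nf
    rw [h1]
    have h2 : ((m:ℤ) - 1) • y ^ m = (m:ℤ) • y ^ m - y ^ m := by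
      rw [sub_smul, one_smul]
    rw [h2]
    abel

lemma sum_eps_pow (hp : p.Prime) (h2 : 2 < p) : ∑ i ∈ Finset.range p, eps p ^ i = 0 := by
  have := aeval_Phi hp h2
  rw [Phi, map_sum] at this
  simpa using this

lemma geom_eps_zero (hp : p.Prime) (h2 : 2 < p) {d : ℕ} (hd1 : 0 < d) (hdp : d < p) :
    ∑ j ∈ Finset.range p, (eps p ^ d) ^ j = 0 := by
  haveI := Fact.mk hp
  haveI : NeZero p := ⟨hp.pos.ne'⟩
  have key : ∀ j : ℕ, (eps p ^ d) ^ j = eps p ^ (d * j % p) := by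
    intro j
    rw [← pow_mul, eps_pow_mod hp h2]
  -- bijectivity of the natural map Fin p → ZMod p
  have ebij : Function.Bijective (fun j : Fin p => ((j : ℕ) : ZMod p)) := by
    rw [Fintype.bijective_iff_injective_and_card]
    constructor
    · intro a b hab
      have := (ZMod.natCast_eq_natCast_iff _ _ _).mp hab
      have ha := a.isLt; have hb := b.isLt
      exact Fin.ext (by unfold Nat.ModEq at this; rwa [Nat.mod_eq_of_lt ha, Nat.mod_eq_of_lt hb] at this)
    · simp [ZMod.card]
  have hd0 : ((d : ZMod p)) ≠ 0 := by
    intro h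
    have := (CharP.cast_eq_zero_iff (ZMod p) p d).mp h
    have := Nat.le_of_dvd hd1 this
    omega
  have mbij : Function.Bijective (fun z : ZMod p => (d : ZMod p) * z) :=
    (Equiv.mulLeft₀ (d : ZMod p) hd0).bijective
  calc ∑ j ∈ Finset.range p, (eps p ^ d) ^ j
      = ∑ j ∈ Finset.range p, eps p ^ (d * j % p) := Finset.sum_congr rfl (fun j _ => key j)
    _ = ∑ j : Fin p, eps p ^ (d * (j:ℕ) % p) := (Fin.sum_univ_eq_sum_range (fun j => eps p ^ (d * j % p)) p).symm
    _ = ∑ j : Fin p, eps p ^ ((d : ZMod p) * ((j:ℕ) : ZMod p)).val := by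
        apply Finset.sum_congr rfl
        intro j _
        have hv : ((d : ZMod p) * ((j:ℕ) : ZMod p)).val = d * (j:ℕ) % p := by
          rw [← Nat.cast_mul, ZMod.val_natCast]
        rw [hv]
    _ = ∑ z : ZMod p, eps p ^ ((d : ZMod p) * z).val :=
        ebij.sum_comp (fun z : ZMod p => eps p ^ ((d : ZMod p) * z).val)
    _ = ∑ z : ZMod p, eps p ^ z.val := mbij.sum_comp (fun z : ZMod p => eps p ^ z.val)
    _ = ∑ j : Fin p, eps p ^ (((j:ℕ) : ZMod p)).val := (ebij.sum_comp _).symm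
    _ = ∑ j ∈ Finset.range p, eps p ^ j := by
        rw [← Fin.sum_univ_eq_sum_range (fun j => eps p ^ j) p]
        apply Finset.sum_congr rfl
        intro j _
        rw [ZMod.val_natCast, Nat.mod_eq_of_lt j.isLt]
    _ = 0 := sum_eps_pow hp h2

/-- The partial inverse of `eps^d - 1`: `(eps^d - 1) * W = p • 1 = W * (eps^d - 1)`. -/
lemma exists_W (hp : p.Prime) (h2 : 2 < p) {d : ℕ} (hd1 : 0 < d) (hdp : d < p) :
    ∃ W : Matrix (Fin (p-1)) (Fin (p-1)) ℤ,
      (eps p ^ d - 1) * W = (p : ℤ) • 1 ∧ W * (eps p ^ d - 1) = (p : ℤ) • 1 := by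
  set y := eps p ^ d with hy
  refine ⟨∑ j ∈ Finset.range p, (j : ℤ) • y ^ j, ?_, ?_⟩
  · have := telescope y p
    rw [geom_eps_zero hp h2 hd1 hdp] at this
    rw [this]
    have hyp : y ^ p = 1 := by
      rw [hy, ← pow_mul, mul_comm, pow_mul, eps_pow_p hp h2, one_pow]
    rw [hyp, sub_zero, sub_smul, one_smul]
    push_cast
    abel
  · have hcomm : Commute (y - 1) (∑ j ∈ Finset.range p, (j : ℤ) • y ^ j) := by
      apply Commute.sum_right
      intro j _
      exact (Commute.sub_left (Commute.pow_right rfl j) (Commute.one_left _)).smul_right _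
    rw [← hcomm.eq]
    have := telescope y p
    rw [geom_eps_zero hp h2 hd1 hdp] at this
    rw [this]
    have hyp : y ^ p = 1 := by
      rw [hy, ← pow_mul, mul_comm, pow_mul, eps_pow_p hp h2, one_pow]
    rw [hyp, sub_zero, sub_smul, one_smul]
    push_cast
    abel

lemma smul_mat_cancel {m n : Type*} {c : ℤ} (hc : c ≠ 0) {M : Matrix m n ℤ}
    (h : c • M = 0) : M = 0 := by
  ext i j
  have := congrFun (congrFun h i) j
  simp only [Matrix.smul_apply, Matrix.zero_apply, smul_eq_mul] at this
  exact (mul_eq_zero.mp this).resolve_left hc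

lemma smul_vec_cancel {m : Type*} {c : ℤ} (hc : c ≠ 0) {v : m → ℤ}
    (h : c • v = 0) : v = 0 := by
  funext i
  have := congrFun h i
  simp only [Pi.smul_apply, Pi.zero_apply, smul_eq_mul] at this
  exact (mul_eq_zero.mp this).resolve_left hc

lemma cancel_right (hp : p.Prime) (h2 : 2 < p) {d : ℕ} (hd1 : 0 < d) (hdp : d < p)
    {M : Matrix (Fin (p-1)) (Fin (p-1)) ℤ} (h : M * (eps p ^ d - 1) = 0) : M = 0 := by
  obtain ⟨W, hW1, hW2⟩ := exists_W hp h2 hd1 hdp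
  have : M * ((eps p ^ d - 1) * W) = 0 := by rw [← mul_assoc, h, zero_mul]
  rw [hW1, mul_smul_comm, mul_one] at this
  exact smul_mat_cancel (by exact_mod_cast hp.pos.ne') this

lemma cancel_left (hp : p.Prime) (h2 : 2 < p) {d : ℕ} (hd1 : 0 < d) (hdp : d < p)
    {M : Matrix (Fin (p-1)) (Fin (p-1)) ℤ} (h : (eps p ^ d - 1) * M = 0) : M = 0 := by
  obtain ⟨W, hW1, hW2⟩ := exists_W hp h2 hd1 hdp
  have : W * ((eps p ^ d - 1) * M) = 0 := by rw [h, mul_zero]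
  rw [← mul_assoc, hW2, smul_mul_assoc, one_mul] at this
  exact smul_mat_cancel (by exact_mod_cast hp.pos.ne') this

lemma cancel_mulVec (hp : p.Prime) (h2 : 2 < p) {d : ℕ} (hd1 : 0 < d) (hdp : d < p)
    {v : Fin (p-1) → ℤ} (h : (eps p ^ d - 1).mulVec v = 0) : v = 0 := by
  obtain ⟨W, hW1, hW2⟩ := exists_W hp h2 hd1 hdp
  have : W.mulVec ((eps p ^ d - 1).mulVec v) = 0 := by rw [h, Matrix.mulVec_zero]
  rw [Matrix.mulVec_mulVec, hW2, Matrix.smul_mulVec, Matrix.one_mulVec] at this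
  exact smul_vec_cancel (by exact_mod_cast hp.pos.ne') this

lemma cancel_vecMul (hp : p.Prime) (h2 : 2 < p) {d : ℕ} (hd1 : 0 < d) (hdp : d < p)
    {v : Fin (p-1) → ℤ} (h : Matrix.vecMul v (eps p ^ d - 1) = 0) : v = 0 := by
  obtain ⟨W, hW1, hW2⟩ := exists_W hp h2 hd1 hdp
  have : Matrix.vecMul (Matrix.vecMul v (eps p ^ d - 1)) W = 0 := by
    rw [h, Matrix.zero_vecMul]
  rw [Matrix.vecMul_vecMul, hW1] at this
  have h2' : Matrix.vecMul v ((p:ℤ) • (1 : Matrix (Fin (p-1)) (Fin (p-1)) ℤ)) = (p:ℤ) • v := by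
    funext j
    simp [Matrix.vecMul, dotProduct, Matrix.smul_apply, Matrix.one_apply, mul_ite,
      Finset.sum_ite_eq, mul_comm]
  rw [h2'] at this
  exact smul_vec_cancel (by exact_mod_cast hp.pos.ne') this

/-- Column sums: the functional `v ↦ ∑ v i` is almost invariant under `eps`. -/
lemma sum_eps_mulVec (h2 : 2 < p) (v : Fin (p-1) → ℤ) :
    ∑ i, (eps p).mulVec v i = (∑ i, v i) - (p:ℤ) * v ⟨p-2, by omega⟩ := by
  have colsum : ∀ y : Fin (p-1),
      (∑ i, eps p i y) = 1 + (if (y:ℕ) = p - 2 then -(p:ℤ) else 0) := by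
    intro y
    have hy := y.isLt
    by_cases hc : (y:ℕ) + 2 < p
    · have : ∀ i : Fin (p-1), eps p i y = if (i:ℕ) = (y:ℕ)+1 then 1 else 0 := by
        intro i; simp [eps, hc]
      rw [Finset.sum_congr rfl (fun i _ => this i)]
      rw [Finset.sum_eq_single (⟨(y:ℕ)+1, by omega⟩ : Fin (p-1))]
      · rw [if_pos rfl, if_neg (by omega)]; norm_num
      · intro b _ hb
        exact if_neg (fun h => hb (Fin.ext h))
      · intro h; exact absurd (Finset.mem_univ _) h
    · have hy2 : (y:ℕ) = p - 2 := by omega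
      have : ∀ i : Fin (p-1), eps p i y = -1 := by
        intro i; simp [eps, hc]
      rw [Finset.sum_congr rfl (fun i _ => this i), Finset.sum_const, Finset.card_univ,
        Fintype.card_fin, if_pos hy2, nsmul_eq_mul]
      have hcast : ((p - 1 : ℕ) : ℤ) = (p : ℤ) - 1 := by omega
      rw [hcast]; ring
  have swap : ∑ i, (eps p).mulVec v i = ∑ y, (∑ i, eps p i y) * v y := by
    simp only [Matrix.mulVec, dotProduct]
    rw [Finset.sum_comm]
    apply Finset.sum_congr rfl
    intro y _
    rw [Finset.sum_mul]
  rw [swap, Finset.sum_congr rfl (fun y _ => by rw [colsum y])]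
  simp only [add_mul, one_mul, ite_mul, zero_mul, neg_mul]
  rw [Finset.sum_add_distrib]
  congr 1
  rw [Finset.sum_eq_single (⟨p-2, by omega⟩ : Fin (p-1))]
  · rw [if_pos rfl]
  · intro b _ hb
    exact if_neg (fun h => hb (Fin.ext h))
  · intro h; exact absurd (Finset.mem_univ _) h

lemma sum_eps_sub_one_mulVec (h2 : 2 < p) (v : Fin (p-1) → ℤ) :
    ∑ i, (eps p - 1).mulVec v i = -(p:ℤ) * v ⟨p-2, by omega⟩ := by
  rw [Matrix.sub_mulVec, Matrix.one_mulVec]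
  have : ∑ i, ((eps p).mulVec v - v) i = (∑ i, (eps p).mulVec v i) - ∑ i, v i := by
    rw [← Finset.sum_sub_distrib]; rfl
  rw [this, sum_eps_mulVec h2 v]
  ring

/-- If `A ⬝ eps^m' = A ⬝ eps^m` with `m < m' < m + p`, then `A = 0`. -/
lemma two_pow_cancel (hp : p.Prime) (h2 : 2 < p) {A : Matrix (Fin (p-1)) (Fin (p-1)) ℤ}
    {m m' : ℕ} (hmm : m < m') (hm'p : m' - m < p)
    (hA : A * eps p ^ m' = A * eps p ^ m) : A = 0 := by
  have h1 : (A * eps p ^ m) * (eps p ^ (m' - m) - 1) = 0 := by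
    rw [mul_sub, mul_one, mul_assoc, ← pow_add]
    rw [show m + (m' - m) = m' by omega, hA, sub_self]
  have hAm : A * eps p ^ m = 0 := cancel_right hp h2 (by omega) hm'p h1
  have : A * eps p ^ (m * p) = A := by
    rw [mul_comm m p, pow_mul, eps_pow_p hp h2, one_pow, mul_one]
  rcases Nat.eq_zero_or_pos m with h0 | h0
  · rw [h0, pow_zero, mul_one] at hAm; exact hAm
  · rw [← this, show m * p = m + m * (p - 1) by
      have : m * p = m * 1 + m * (p-1) := by rw [← Nat.mul_add]; congr 1; omega
      omega, pow_add, ← mul_assoc, hAm, zero_mul]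

lemma eps_pow_pm1_e0 (hp : p.Prime) (h2 : 2 < p) :
    (eps p ^ (p-1)).mulVec (sing p 0) = fun _ => (-1 : ℤ) := by
  rw [eps_pow_mulVec_e0 hp h2]
  have hmod : (X ^ (p-1) : ℤ[X]) %ₘ Phi p = X ^ (p-1) - Phi p := by
    have hd : ((X ^ (p-1) : ℤ[X]) - Phi p).degree < ((p - 1 : ℕ) : WithBot ℕ) := by
      rw [degree_lt_iff_coeff_zero]
      intro m hm
      rw [coeff_sub, coeff_X_pow, Phi_coeff]
      split_ifs <;> omega
    calc (X ^ (p-1) : ℤ[X]) %ₘ Phi p = (X ^ (p-1) - Phi p) %ₘ Phi p :=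
          modByMonic_congr hp (by rw [show (X ^ (p-1) : ℤ[X]) - (X ^ (p-1) - Phi p) = Phi p by ring])
      _ = X ^ (p-1) - Phi p := modByMonic_small hp hd
  rw [hmod]
  funext i
  have hi := i.isLt
  simp only [cvec, coeff_sub, coeff_X_pow, Phi_coeff]
  split_ifs <;> omega

lemma sum_sing0 (h2 : 2 < p) : ∑ i, sing p 0 i = 1 := by
  rw [Finset.sum_eq_single (⟨0, by omega⟩ : Fin (p-1))]
  · rw [show sing p 0 ⟨0, by omega⟩ = 1 from if_pos rfl]
  · intro b _ hb
    exact if_neg (fun h => hb (Fin.ext h))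
  · intro h; exact absurd (Finset.mem_univ _) h

section Blocks

/-- index of entry `t` in block `k`. -/
def bidx (p : ℕ) (k : Fin (p+1)) (t : Fin (p-1)) : Fin (p^2) :=
  ⟨(k:ℕ) * (p-1) + (t:ℕ), by
    have hk := k.isLt
    have ht := t.isLt
    have hmul : (k:ℕ) * (p-1) ≤ p * (p-1) := Nat.mul_le_mul_right _ (by omega)
    have hpp : p * (p - 1) + p = p ^ 2 := by
      obtain ⟨q, rfl⟩ : ∃ q, p = q + 1 := ⟨p - 1, by omega⟩
      simp only [Nat.add_sub_cancel]
      ring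
    omega⟩

/-- the last index. -/
def lidx (p : ℕ) (h : 0 < p) : Fin (p^2) := ⟨p^2 - 1, Nat.sub_lt (pow_pos h 2) one_pos⟩

lemma sq_identity (h2 : 2 < p) : (p+1) * (p-1) + 1 = p^2 := by
  obtain ⟨q, rfl⟩ : ∃ q, p = q + 2 := ⟨p - 2, by omega⟩
  have h : q + 2 - 1 = q + 1 := by omega
  rw [h]; ring

lemma bidx_val (k : Fin (p+1)) (t : Fin (p-1)) : ((bidx p k t : ℕ)) = k * (p-1) + t := rfl

lemma bidx_div (k : Fin (p+1)) (t : Fin (p-1)) : ((bidx p k t : ℕ)) / (p-1) = k := by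
  have ht := t.isLt
  rw [bidx_val, mul_comm, Nat.mul_add_div (by omega), Nat.div_eq_of_lt ht, add_zero]

lemma bidx_mod (k : Fin (p+1)) (t : Fin (p-1)) : ((bidx p k t : ℕ)) % (p-1) = t := by
  have ht := t.isLt
  rw [bidx_val, mul_comm, Nat.mul_add_mod, Nat.mod_eq_of_lt ht]

lemma lidx_div (h2 : 2 < p) (h : 0 < p) : ((lidx p h : ℕ)) / (p-1) = p + 1 := by
  show (p^2 - 1) / (p-1) = p + 1
  have hsq := sq_identity h2
  have heq : p^2 - 1 = (p+1)*(p-1) := by omega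
  rw [heq, Nat.mul_div_cancel _ (by omega)]

lemma bidx_div_ne (h2 : 2 < p) (k : Fin (p+1)) (t : Fin (p-1)) :
    ((bidx p k t : ℕ)) / (p-1) ≠ p + 1 := by
  rw [bidx_div]
  have := k.isLt
  omega

lemma bidx_ne_lidx (h2 : 2 < p) (h : 0 < p) (k : Fin (p+1)) (t : Fin (p-1)) :
    bidx p k t ≠ lidx p h := by
  intro hcontra
  have h1 : ((bidx p k t : ℕ)) / (p-1) = ((lidx p h : ℕ)) / (p-1) := by rw [hcontra]
  rw [bidx_div, lidx_div h2] at h1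
  have := k.isLt
  omega

lemma index_cases (h2 : 2 < p) (x : Fin (p^2)) :
    (∃ k t, x = bidx p k t) ∨ x = lidx p (by omega) := by
  have hsq := sq_identity h2
  have hx := x.isLt
  by_cases hlast : (x:ℕ) = p^2 - 1
  · right; exact Fin.ext hlast
  · left
    have hdivlt : (x:ℕ) / (p-1) < p + 1 := by
      rw [Nat.div_lt_iff_lt_mul (by omega : 0 < p - 1)]
      omega
    refine ⟨⟨(x:ℕ)/(p-1), hdivlt⟩, ⟨(x:ℕ)%(p-1), Nat.mod_lt _ (by omega)⟩, Fin.ext ?_⟩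
    rw [bidx_val, mul_comm]
    exact (Nat.div_add_mod _ _).symm

lemma sum_split {G : Type*} [AddCommMonoid G] (h2 : 2 < p) (F : Fin (p^2) → G) :
    ∑ x, F x = (∑ k : Fin (p+1), ∑ t : Fin (p-1), F (bidx p k t)) + F (lidx p (by omega)) := by
  rw [← Finset.sum_erase_add _ _ (Finset.mem_univ (lidx p (by omega : 0 < p)))]
  congr 1
  rw [← Finset.sum_product' (s := (Finset.univ : Finset (Fin (p+1))))
      (t := (Finset.univ : Finset (Fin (p-1)))) (f := fun k t => F (bidx p k t))]
  have hsq := sq_identity h2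
  apply Finset.sum_nbij' (f := F) (s := Finset.univ.erase (lidx p (by omega : 0 < p)))
    (t := Finset.univ ×ˢ Finset.univ)
    (g := fun kt : Fin (p+1) × Fin (p-1) => F (bidx p kt.1 kt.2))
    (i := fun x => ((⟨(x:ℕ)/(p-1) % (p+1), Nat.mod_lt _ (by omega)⟩ : Fin (p+1)),
                    (⟨(x:ℕ)%(p-1), Nat.mod_lt _ (by omega)⟩ : Fin (p-1))))
    (j := fun kt => bidx p kt.1 kt.2)
  · intro a _
    exact Finset.mem_product.mpr ⟨Finset.mem_univ _, Finset.mem_univ _⟩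
  · intro b _
    exact Finset.mem_erase.mpr ⟨bidx_ne_lidx h2 (by omega) _ _, Finset.mem_univ _⟩
  · intro a ha
    have hane : a ≠ lidx p (by omega : 0 < p) := (Finset.mem_erase.mp ha).1
    have halt : (a:ℕ) < p^2 := a.isLt
    have hne : (a:ℕ) ≠ p^2 - 1 := fun h => hane (Fin.ext h)
    have hdivlt : (a:ℕ) / (p-1) < p + 1 := by
      rw [Nat.div_lt_iff_lt_mul (by omega : 0 < p - 1)]
      omega
    apply Fin.ext
    rw [bidx_val]
    simp only [Nat.mod_eq_of_lt hdivlt]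
    rw [mul_comm]
    exact Nat.div_add_mod _ _
  · intro b _
    have hk := b.1.isLt
    refine Prod.ext ?_ ?_
    · apply Fin.ext
      simp only [bidx_div, Nat.mod_eq_of_lt hk]
    · apply Fin.ext
      simp only [bidx_mod]
  · intro a ha
    have hane : a ≠ lidx p (by omega : 0 < p) := (Finset.mem_erase.mp ha).1
    have halt : (a:ℕ) < p^2 := a.isLt
    have hne : (a:ℕ) ≠ p^2 - 1 := fun h => hane (Fin.ext h)
    have hdivlt : (a:ℕ) / (p-1) < p + 1 := by
      rw [Nat.div_lt_iff_lt_mul (by omega : 0 < p - 1)]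
      omega
    apply congrArg F
    apply Fin.ext
    rw [bidx_val]
    simp only [Nat.mod_eq_of_lt hdivlt]
    rw [mul_comm]
    exact (Nat.div_add_mod _ _).symm

variable (p)

/-- block `(k,l)` of a big matrix. -/
def Bl (M : Matrix (Fin (p^2)) (Fin (p^2)) ℤ) (k l : Fin (p+1)) :
    Matrix (Fin (p-1)) (Fin (p-1)) ℤ :=
  Matrix.of fun t u => M (bidx p k t) (bidx p l u)

/-- block `k` of the last column. -/
def Uc (h2 : 2 < p) (M : Matrix (Fin (p^2)) (Fin (p^2)) ℤ) (k : Fin (p+1)) : Fin (p-1) → ℤ :=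
  fun t => M (bidx p k t) (lidx p (by omega))

/-- block `l` of the last row. -/
def Rr (h2 : 2 < p) (M : Matrix (Fin (p^2)) (Fin (p^2)) ℤ) (l : Fin (p+1)) : Fin (p-1) → ℤ :=
  fun u => M (lidx p (by omega)) (bidx p l u)

/-- the corner entry. -/
def Cr (h2 : 2 < p) (M : Matrix (Fin (p^2)) (Fin (p^2)) ℤ) : ℤ :=
  M (lidx p (by omega)) (lidx p (by omega))

lemma Bl_mul (h2 : 2 < p) (M N : Matrix (Fin (p^2)) (Fin (p^2)) ℤ) (k l : Fin (p+1)) :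
    Bl p (M*N) k l = (∑ m, Bl p M k m * Bl p N m l)
      + Matrix.vecMulVec (Uc p h2 M k) (Rr p h2 N l) := by
  ext t u
  simp only [Bl, Uc, Rr, Matrix.of_apply, Matrix.add_apply, Matrix.sum_apply,
    Matrix.mul_apply, Matrix.vecMulVec_apply]
  rw [sum_split h2 (fun z => M (bidx p k t) z * N z (bidx p l u))]

lemma Uc_mul (h2 : 2 < p) (M N : Matrix (Fin (p^2)) (Fin (p^2)) ℤ) (k : Fin (p+1)) :
    Uc p h2 (M*N) k = (∑ m, (Bl p M k m).mulVec (Uc p h2 N m)) + (Cr p h2 N) • (Uc p h2 M k) := by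
  funext t
  simp only [Uc, Bl, Cr, Matrix.of_apply, Pi.add_apply, Finset.sum_apply, Pi.smul_apply,
    Matrix.mulVec, dotProduct, Matrix.mul_apply, smul_eq_mul]
  rw [sum_split h2 (fun z => M (bidx p k t) z * N z (lidx p (by omega)))]
  ring

lemma Rr_mul (h2 : 2 < p) (M N : Matrix (Fin (p^2)) (Fin (p^2)) ℤ) (l : Fin (p+1)) :
    Rr p h2 (M*N) l = (∑ m, Matrix.vecMul (Rr p h2 M m) (Bl p N m l))
      + (Cr p h2 M) • (Rr p h2 N l) := by
  funext u
  simp only [Rr, Bl, Cr, Matrix.of_apply, Pi.add_apply, Finset.sum_apply, Pi.smul_apply,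
    Matrix.vecMul, dotProduct, Matrix.mul_apply, smul_eq_mul]
  rw [sum_split h2 (fun z => M (lidx p (by omega)) z * N z (bidx p l u))]

lemma Cr_mul (h2 : 2 < p) (M N : Matrix (Fin (p^2)) (Fin (p^2)) ℤ) :
    Cr p h2 (M*N) = (∑ m, dotProduct (Rr p h2 M m) (Uc p h2 N m))
      + Cr p h2 M * Cr p h2 N := by
  simp only [Rr, Uc, Cr, dotProduct, Matrix.mul_apply]
  rw [sum_split h2 (fun z => M (lidx p (by omega)) z * N z (lidx p (by omega)))]

lemma ext_blocks (h2 : 2 < p) {M N : Matrix (Fin (p^2)) (Fin (p^2)) ℤ}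
    (hB : ∀ k l, Bl p M k l = Bl p N k l) (hU : ∀ k, Uc p h2 M k = Uc p h2 N k)
    (hR : ∀ l, Rr p h2 M l = Rr p h2 N l) (hC : Cr p h2 M = Cr p h2 N) : M = N := by
  ext x y
  rcases index_cases h2 x with ⟨k, t, rfl⟩ | rfl <;>
    rcases index_cases h2 y with ⟨l, u, rfl⟩ | rfl
  · exact congrFun (congrFun (hB k l) t) u
  · exact congrFun (hU k) t
  · exact congrFun (hR l) u
  · exact hC

lemma Bl_Gamma0 (h2 : 2 < p) (e : ℕ → ℕ) (U : ℕ → ℕ → ℤ) (k l : Fin (p+1)) :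
    Bl p (Gamma0 p e U) k l = if k = l then eps p ^ (e (k:ℕ)) else 0 := by
  ext t u
  simp only [Bl, Matrix.of_apply, Gamma0]
  rw [bidx_div, bidx_div, bidx_mod, bidx_mod]
  rw [if_neg (by have := k.isLt; omega : ¬ ((k:ℕ) = p + 1)),
    if_neg (by have := l.isLt; omega : ¬ ((l:ℕ) = p + 1))]
  by_cases hkl : k = l
  · subst hkl
    rw [if_pos rfl, if_pos rfl]
    simp only [epsE]
    rw [dif_pos t.isLt, dif_pos u.isLt]
  · rw [if_neg (fun h => hkl (Fin.ext h)), if_neg hkl]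
    rfl

lemma Uc_Gamma0 (h2 : 2 < p) (e : ℕ → ℕ) (U : ℕ → ℕ → ℤ) (k : Fin (p+1)) :
    Uc p h2 (Gamma0 p e U) k = fun t : Fin (p-1) => U (k:ℕ) (t:ℕ) := by
  funext t
  simp only [Uc, Gamma0, Matrix.of_apply]
  rw [bidx_div, bidx_mod, lidx_div h2]
  rw [if_neg (by have := k.isLt; omega : ¬ ((k:ℕ) = p + 1)), if_pos rfl]

lemma Rr_Gamma0 (h2 : 2 < p) (e : ℕ → ℕ) (U : ℕ → ℕ → ℤ) (l : Fin (p+1)) :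
    Rr p h2 (Gamma0 p e U) l = 0 := by
  funext u
  simp only [Rr, Gamma0, Matrix.of_apply]
  rw [bidx_div, lidx_div h2]
  rw [if_pos rfl, if_neg (by have := l.isLt; omega : ¬ ((l:ℕ) = p + 1))]
  rfl

lemma Cr_Gamma0 (h2 : 2 < p) (e : ℕ → ℕ) (U : ℕ → ℕ → ℤ) :
    Cr p h2 (Gamma0 p e U) = 1 := by
  simp only [Cr, Gamma0, Matrix.of_apply]
  rw [lidx_div h2]
  rw [if_pos rfl, if_pos rfl]

lemma Bl_one (h2 : 2 < p) (k l : Fin (p+1)) :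
    Bl p (1 : Matrix (Fin (p^2)) (Fin (p^2)) ℤ) k l = if k = l then 1 else 0 := by
  ext t u
  simp only [Bl, Matrix.of_apply]
  by_cases hkl : k = l
  · subst hkl
    rw [if_pos rfl]
    by_cases htu : t = u
    · subst htu
      rw [Matrix.one_apply_eq, Matrix.one_apply_eq]
    · rw [Matrix.one_apply_ne (fun h : bidx p k t = bidx p k u => htu (by
        have := congrArg (fun z : Fin (p^2) => (z:ℕ) % (p-1)) h
        simp only [bidx_mod] at this
        exact Fin.ext this)),
        Matrix.one_apply_ne htu]
  · rw [if_neg hkl]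
    rw [Matrix.one_apply_ne (fun h : bidx p k t = bidx p l u => hkl (by
      have := congrArg (fun z : Fin (p^2) => (z:ℕ) / (p-1)) h
      simp only [bidx_div] at this
      exact Fin.ext this))]
    rfl

lemma Uc_one (h2 : 2 < p) (k : Fin (p+1)) :
    Uc p h2 (1 : Matrix (Fin (p^2)) (Fin (p^2)) ℤ) k = 0 := by
  funext t
  exact Matrix.one_apply_ne (bidx_ne_lidx h2 _ k t)

lemma Rr_one (h2 : 2 < p) (l : Fin (p+1)) :
    Rr p h2 (1 : Matrix (Fin (p^2)) (Fin (p^2)) ℤ) l = 0 := by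
  funext u
  exact Matrix.one_apply_ne (fun h => (bidx_ne_lidx h2 _ l u) h.symm)

lemma Cr_one (h2 : 2 < p) : Cr p h2 (1 : Matrix (Fin (p^2)) (Fin (p^2)) ℤ) = 1 :=
  Matrix.one_apply_eq _

/-- `M` is a structured matrix: block-diagonal `D` in the τ-part, last column blocks `V`,
zero last row, corner 1. -/
def IsSt (h2 : 2 < p) (M : Matrix (Fin (p^2)) (Fin (p^2)) ℤ)
    (D : Fin (p+1) → Matrix (Fin (p-1)) (Fin (p-1)) ℤ)
    (V : Fin (p+1) → Fin (p-1) → ℤ) : Prop :=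
  (∀ k l, Bl p M k l = if k = l then D k else 0) ∧ (∀ k, Uc p h2 M k = V k) ∧
    (∀ l, Rr p h2 M l = 0) ∧ Cr p h2 M = 1

lemma IsSt_one (h2 : 2 < p) :
    IsSt p h2 1 (fun _ => 1) (fun _ => 0) :=
  ⟨Bl_one p h2, Uc_one p h2, Rr_one p h2, Cr_one p h2⟩

lemma IsSt_Gamma0 (h2 : 2 < p) (e : ℕ → ℕ) (U : ℕ → ℕ → ℤ) :
    IsSt p h2 (Gamma0 p e U) (fun k => eps p ^ (e (k:ℕ))) (fun k t => U (k:ℕ) (t:ℕ)) :=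
  ⟨Bl_Gamma0 p h2 e U, Uc_Gamma0 p h2 e U, Rr_Gamma0 p h2 e U, Cr_Gamma0 p h2 e U⟩

lemma IsSt_mul (h2 : 2 < p) {M N D D' V V'} (hM : IsSt p h2 M D V) (hN : IsSt p h2 N D' V') :
    IsSt p h2 (M * N) (fun k => D k * D' k) (fun k => (D k).mulVec (V' k) + V k) := by
  obtain ⟨hMB, hMU, hMR, hMC⟩ := hM
  obtain ⟨hNB, hNU, hNR, hNC⟩ := hN
  refine ⟨?_, ?_, ?_, ?_⟩
  · intro k l
    rw [Bl_mul p h2]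
    rw [hMU, hNR]
    have hvv : Matrix.vecMulVec (V k) (0 : Fin (p-1) → ℤ) = 0 := by
      ext t u; simp [Matrix.vecMulVec_apply]
    rw [hvv, add_zero]
    rw [Finset.sum_congr rfl (fun m _ => by rw [hMB, hNB])]
    by_cases hkl : k = l
    · subst hkl
      rw [Finset.sum_eq_single k]
      · rw [if_pos rfl, if_pos rfl, if_pos rfl]
      · intro m _ hm
        rw [if_neg (Ne.symm hm), zero_mul]
      · intro h; exact absurd (Finset.mem_univ _) h
    · rw [if_neg hkl, Finset.sum_eq_zero]
      intro m _
      by_cases hkm : k = m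
      · rw [if_neg (show ¬ m = l by rw [← hkm]; exact hkl), mul_zero]
      · rw [if_neg hkm, zero_mul]
  · intro k
    rw [Uc_mul p h2, hNC, one_smul, hMU]
    congr 1
    rw [Finset.sum_congr rfl (fun m _ => by rw [hMB, hNU])]
    rw [Finset.sum_eq_single k]
    · rw [if_pos rfl]
    · intro m _ hm
      rw [if_neg (Ne.symm hm), Matrix.zero_mulVec]
    · intro h; exact absurd (Finset.mem_univ _) h
  · intro l
    rw [Rr_mul p h2, hMC, one_smul, hNR, add_zero]
    rw [Finset.sum_congr rfl (fun m _ => by rw [hMR, Matrix.zero_vecMul])]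
    rw [Finset.sum_const_zero]
  · rw [Cr_mul p h2, hMC, hNC, mul_one]
    rw [Finset.sum_congr rfl (fun m _ => by rw [hMR, zero_dotProduct])]
    rw [Finset.sum_const_zero, zero_add]

lemma IsSt_pow (h2 : 2 < p) {M D V} (hM : IsSt p h2 M D V) (j : ℕ) :
    IsSt p h2 (M ^ j) (fun k => D k ^ j)
      (fun k => (∑ i ∈ Finset.range j, D k ^ i).mulVec (V k)) := by
  induction j with
  | zero =>
    simp only [pow_zero, Finset.range_zero, Finset.sum_empty, Matrix.zero_mulVec]
    exact IsSt_one p h2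
  | succ j ih =>
    have h := IsSt_mul p h2 ih hM
    have hD : (fun k => D k ^ j * D k) = fun k => D k ^ (j+1) := by
      funext k; rw [pow_succ]
    have hV : (fun k => (D k ^ j).mulVec (V k)
          + (∑ i ∈ Finset.range j, D k ^ i).mulVec (V k))
        = fun k => (∑ i ∈ Finset.range (j+1), D k ^ i).mulVec (V k) := by
      funext k
      rw [Finset.sum_range_succ, Matrix.add_mulVec]
      abel
    rw [pow_succ]
    rw [hD, hV] at h
    exact h

lemma IsSt_unique (h2 : 2 < p) {M N D V} (hM : IsSt p h2 M D V) (hN : IsSt p h2 N D V) :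
    M = N := by
  obtain ⟨hMB, hMU, hMR, hMC⟩ := hM
  obtain ⟨hNB, hNU, hNR, hNC⟩ := hN
  exact ext_blocks p h2 (fun k l => by rw [hMB, hNB]) (fun k => by rw [hMU, hNU])
    (fun l => by rw [hMR, hNR]) (by rw [hMC, hNC])

lemma Gamma0_pow_eq_one (h2 : 2 < p) (e : ℕ → ℕ) (U : ℕ → ℕ → ℤ)
    (hd : ∀ k : Fin (p+1), (eps p ^ (e (k:ℕ))) ^ p = 1)
    (hv : ∀ k : Fin (p+1), (∑ i ∈ Finset.range p, (eps p ^ (e (k:ℕ))) ^ i).mulVec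
        (fun t : Fin (p-1) => U (k:ℕ) (t:ℕ)) = 0) :
    Gamma0 p e U ^ p = 1 := by
  have h := IsSt_pow p h2 (IsSt_Gamma0 p h2 e U) p
  have hD : (fun k : Fin (p+1) => (eps p ^ (e (k:ℕ))) ^ p)
      = (fun _ : Fin (p+1) => (1 : Matrix (Fin (p-1)) (Fin (p-1)) ℤ)) := funext hd
  have hV : (fun k : Fin (p+1) => (∑ i ∈ Finset.range p, (eps p ^ (e (k:ℕ))) ^ i).mulVec
        (fun t : Fin (p-1) => U (k:ℕ) (t:ℕ)))
      = (fun _ : Fin (p+1) => (0 : Fin (p-1) → ℤ)) := funext hv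
  rw [hD, hV] at h
  exact IsSt_unique p h2 h (IsSt_one p h2)

lemma Gamma0a_pow_p (hp : p.Prime) (h2 : 2 < p) : Gamma0a p ^ p = 1 := by
  apply Gamma0_pow_eq_one p h2
  · intro k
    rw [pow_right_comm, eps_pow_p hp h2, one_pow]
  · intro k
    by_cases hk : (k:ℕ) = p
    · have hz : (fun t : Fin (p-1) => Ua p (k:ℕ) (t:ℕ)) = 0 := by
        funext t
        simp only [Ua, hk, Pi.zero_apply]
        rw [if_neg (by omega)]
      rw [hz, Matrix.mulVec_zero]
    · rw [show ea p (k:ℕ) = 1 from if_neg hk, pow_one]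
      have : (∑ i ∈ Finset.range p, eps p ^ i) = 0 := sum_eps_pow hp h2
      rw [this, Matrix.zero_mulVec]

lemma Gamma0b_pow_p (hp : p.Prime) (h2 : 2 < p) : Gamma0b p ^ p = 1 := by
  apply Gamma0_pow_eq_one p h2
  · intro k
    rw [pow_right_comm, eps_pow_p hp h2, one_pow]
  · intro k
    have hk1 := k.isLt
    by_cases hk : (k:ℕ) = p
    · rw [show eb p (k:ℕ) = 1 from if_pos hk, pow_one, sum_eps_pow hp h2, Matrix.zero_mulVec]
    · by_cases hk2 : (k:ℕ) = p - 1
      · have hz : (fun t : Fin (p-1) => Ub p (k:ℕ) (t:ℕ)) = 0 := by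
          funext t
          have ht := t.isLt
          simp only [Ub, hk2, Pi.zero_apply]
          rw [if_neg (by omega), if_neg (by omega)]
        rw [hz, Matrix.mulVec_zero]
      · rw [show eb p (k:ℕ) = p - 1 - (k:ℕ) from if_neg hk,
          geom_eps_zero hp h2 (by omega) (by omega), Matrix.zero_mulVec]

/-- The key intertwining identity for commutativity. -/
lemma Ucol_identity (hp : p.Prime) (h2 : 2 < p) (k : Fin (p+1)) :
    (eps p ^ ea p (k:ℕ)).mulVec (fun t : Fin (p-1) => Ub p (k:ℕ) (t:ℕ))
        + (fun t : Fin (p-1) => Ua p (k:ℕ) (t:ℕ))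
      = (eps p ^ eb p (k:ℕ)).mulVec (fun t : Fin (p-1) => Ua p (k:ℕ) (t:ℕ))
        + (fun t : Fin (p-1) => Ub p (k:ℕ) (t:ℕ)) := by
  have hk1 := k.isLt
  by_cases hk : (k:ℕ) = p
  · -- k = p : ea = 0, eb = 1, Ua = 0, Ub = e₀
    have hza : (fun t : Fin (p-1) => Ua p (k:ℕ) (t:ℕ)) = 0 := by
      funext t; simp only [Ua, hk, Pi.zero_apply]; rw [if_neg (by omega)]
    rw [show ea p (k:ℕ) = 0 from if_pos hk, show eb p (k:ℕ) = 1 from if_pos hk,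
      hza, Matrix.mulVec_zero, pow_zero, Matrix.one_mulVec, add_zero, zero_add]
  · -- k < p : ea = 1, Ua = e₀
    have hUa : (fun t : Fin (p-1) => Ua p (k:ℕ) (t:ℕ)) = sing p 0 := by
      funext t; simp only [Ua, sing]
      split_ifs <;> omega
    rw [show ea p (k:ℕ) = 1 from if_neg hk, pow_one,
      show eb p (k:ℕ) = p - 1 - (k:ℕ) from if_neg hk, hUa]
    by_cases hk0 : (k:ℕ) = 0
    · -- k = 0 : Ub = all ones, eps^{p-1} e₀ = all (-1)
      have hUb : (fun t : Fin (p-1) => Ub p (k:ℕ) (t:ℕ)) = fun _ => (1:ℤ) := by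
        funext t
        have ht := t.isLt
        simp only [Ub, hk0]
        rw [if_neg (by omega), if_pos (by omega)]
      rw [hUb, show p - 1 - (k:ℕ) = p - 1 by omega, eps_pow_pm1_e0 hp h2]
      funext t
      have ht := t.isLt
      simp only [Pi.add_apply]
      rw [eps_mulVec h2]
      simp only [sing]
      split_ifs <;> omega
    · -- 0 < k < p
      have hd : p - 1 - (k:ℕ) < p - 1 := by omega
      rw [← sing_eq_pow_e0 hp h2 hd]
      funext t
      have ht := t.isLt
      simp only [Pi.add_apply]
      rw [eps_mulVec h2]
      simp only [Ub, sing]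
      split_ifs <;> omega

lemma Gamma0_comm (hp : p.Prime) (h2 : 2 < p) :
    Gamma0a p * Gamma0b p = Gamma0b p * Gamma0a p := by
  have h1 := IsSt_mul p h2 (IsSt_Gamma0 p h2 (ea p) (Ua p)) (IsSt_Gamma0 p h2 (eb p) (Ub p))
  have h2' := IsSt_mul p h2 (IsSt_Gamma0 p h2 (eb p) (Ub p)) (IsSt_Gamma0 p h2 (ea p) (Ua p))
  have hD : (fun k : Fin (p+1) => eps p ^ ea p (k:ℕ) * eps p ^ eb p (k:ℕ))
      = (fun k : Fin (p+1) => eps p ^ eb p (k:ℕ) * eps p ^ ea p (k:ℕ)) := by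
    funext k
    rw [← pow_add, ← pow_add, add_comm]
  have hV : (fun k : Fin (p+1) => (eps p ^ ea p (k:ℕ)).mulVec
        (fun t : Fin (p-1) => Ub p (k:ℕ) (t:ℕ)) + (fun t : Fin (p-1) => Ua p (k:ℕ) (t:ℕ)))
      = (fun k : Fin (p+1) => (eps p ^ eb p (k:ℕ)).mulVec
        (fun t : Fin (p-1) => Ua p (k:ℕ) (t:ℕ)) + (fun t : Fin (p-1) => Ub p (k:ℕ) (t:ℕ))) :=
    funext (Ucol_identity p hp h2)
  rw [hD, hV] at h1
  exact IsSt_unique p h2 h1 h2'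

lemma Gamma0_faithful (hp : p.Prime) (h2 : 2 < p) (i j : ℕ)
    (h : Gamma0a p ^ i * Gamma0b p ^ j = 1) : p ∣ i ∧ p ∣ j := by
  have h1 := IsSt_mul p h2 (IsSt_pow p h2 (IsSt_Gamma0 p h2 (ea p) (Ua p)) i)
    (IsSt_pow p h2 (IsSt_Gamma0 p h2 (eb p) (Ub p)) j)
  have hBk : ∀ k : Fin (p+1), (eps p ^ ea p (k:ℕ)) ^ i * (eps p ^ eb p (k:ℕ)) ^ j = 1 := by
    intro k
    have h' : Gamma0 p (ea p) (Ua p) ^ i * Gamma0 p (eb p) (Ub p) ^ j = 1 := h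
    have e1 := h1.1 k k
    rw [h', Bl_one p h2, if_pos rfl, if_pos rfl] at e1
    exact e1.symm
  constructor
  · have hk := hBk ⟨p-1, by omega⟩
    have hval : ((⟨p-1, by omega⟩ : Fin (p+1)) : ℕ) = p - 1 := rfl
    rw [hval, show ea p (p-1) = 1 from if_neg (by omega),
      show eb p (p-1) = p - 1 - (p-1) from if_neg (by omega)] at hk
    rw [show p - 1 - (p-1) = 0 by omega, pow_zero, one_pow, mul_one, pow_one] at hk
    exact (eps_pow_eq_one_iff hp h2 i).mp hk
  · have hk := hBk ⟨p, by omega⟩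
    have hval : ((⟨p, by omega⟩ : Fin (p+1)) : ℕ) = p := rfl
    rw [hval, show ea p p = 0 from if_pos rfl, show eb p p = 1 from if_pos rfl] at hk
    rw [pow_zero, one_pow, one_mul, pow_one] at hk
    exact (eps_pow_eq_one_iff hp h2 j).mp hk

lemma Bl_zero (k l : Fin (p+1)) : Bl p (0 : Matrix (Fin (p^2)) (Fin (p^2)) ℤ) k l = 0 := by
  ext t u; rfl

lemma Uc_zero (h2 : 2 < p) (k : Fin (p+1)) :
    Uc p h2 (0 : Matrix (Fin (p^2)) (Fin (p^2)) ℤ) k = 0 := by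
  funext t; rfl

lemma Rr_zero (h2 : 2 < p) (l : Fin (p+1)) :
    Rr p h2 (0 : Matrix (Fin (p^2)) (Fin (p^2)) ℤ) l = 0 := by
  funext u; rfl

lemma Cr_zero (h2 : 2 < p) : Cr p h2 (0 : Matrix (Fin (p^2)) (Fin (p^2)) ℤ) = 0 := rfl

/-- The heart of indecomposability: an idempotent integer matrix commuting with `Γ₀(a)` and
`Γ₀(b)` is `0` or `1`. -/
theorem projector_trivial (hp : p.Prime) (h2 : 2 < p)
    (P : Matrix (Fin (p^2)) (Fin (p^2)) ℤ)
    (ha : P * Gamma0a p = Gamma0a p * P) (hb : P * Gamma0b p = Gamma0b p * P)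
    (hidem : P * P = P) : P = 0 ∨ P = 1 := by
  have hplt : 1 < p := by omega
  have ha' : P * Gamma0 p (ea p) (Ua p) = Gamma0 p (ea p) (Ua p) * P := ha
  have hb' : P * Gamma0 p (eb p) (Ub p) = Gamma0 p (eb p) (Ub p) * P := hb
  -- generic equation for the last row
  have gen : ∀ (G : Matrix (Fin (p^2)) (Fin (p^2)) ℤ)
      (DG : Fin (p+1) → Matrix (Fin (p-1)) (Fin (p-1)) ℤ) (VG : Fin (p+1) → Fin (p-1) → ℤ),
      IsSt p h2 G DG VG → P * G = G * P →
      ∀ l, Matrix.vecMul (Rr p h2 P l) (DG l) = Rr p h2 P l := by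
    intro G DG VG hG hcomm l
    have e1 : Rr p h2 (P * G) l = Rr p h2 (G * P) l := by rw [hcomm]
    rw [Rr_mul p h2, Rr_mul p h2, hG.2.2.2, one_smul, hG.2.2.1 l, smul_zero, add_zero] at e1
    rw [Finset.sum_congr rfl (fun m _ => by rw [hG.1 m l]), Finset.sum_eq_single l] at e1
    rotate_left
    · intro m _ hm
      rw [if_neg hm, Matrix.vecMul_zero]
    · intro hmem; exact absurd (Finset.mem_univ _) hmem
    rw [Finset.sum_congr rfl (fun m _ => by rw [hG.2.2.1 m, Matrix.zero_vecMul]),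
      Finset.sum_const_zero, zero_add] at e1
    rw [if_pos rfl] at e1
    exact e1
  -- the last row of P is zero
  have hRzero : ∀ l, Rr p h2 P l = 0 := by
    intro l
    have key : Matrix.vecMul (Rr p h2 P l) (eps p) = Rr p h2 P l := by
      by_cases hl : (l:ℕ) = p
      · have := gen _ _ _ (IsSt_Gamma0 p h2 (eb p) (Ub p)) hb' l
        rwa [show eb p (l:ℕ) = 1 from if_pos hl, pow_one] at this
      · have := gen _ _ _ (IsSt_Gamma0 p h2 (ea p) (Ua p)) ha' l
        rwa [show ea p (l:ℕ) = 1 from if_neg hl, pow_one] at this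
    apply cancel_vecMul hp h2 one_pos hplt
    rw [pow_one, Matrix.vecMul_sub, Matrix.vecMul_one, key, sub_self]
  have hvv0 : ∀ v : Fin (p-1) → ℤ, Matrix.vecMulVec v (0 : Fin (p-1) → ℤ) = 0 := by
    intro v; ext t u; simp [Matrix.vecMulVec_apply]
  -- generic block-commutation equations
  have genB : ∀ (G : Matrix (Fin (p^2)) (Fin (p^2)) ℤ)
      (DG : Fin (p+1) → Matrix (Fin (p-1)) (Fin (p-1)) ℤ) (VG : Fin (p+1) → Fin (p-1) → ℤ),
      IsSt p h2 G DG VG → P * G = G * P →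
      ∀ k l, Bl p P k l * DG l = DG k * Bl p P k l := by
    intro G DG VG hG hcomm k l
    have e1 : Bl p (P * G) k l = Bl p (G * P) k l := by rw [hcomm]
    rw [Bl_mul p h2, Bl_mul p h2, hG.2.2.1 l, hvv0, add_zero, hRzero l, hvv0, add_zero] at e1
    rw [Finset.sum_congr rfl (fun m _ => by rw [hG.1 m l]), Finset.sum_eq_single l] at e1
    rotate_left
    · intro m _ hm
      rw [if_neg hm, mul_zero]
    · intro hmem; exact absurd (Finset.mem_univ _) hmem
    rw [Finset.sum_congr rfl (fun m _ => by rw [hG.1 k m]), Finset.sum_eq_single k] at e1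
    rotate_left
    · intro m _ hm
      rw [if_neg (fun hh : k = m => hm (hh.symm)), zero_mul]
    · intro hmem; exact absurd (Finset.mem_univ _) hmem
    rw [if_pos rfl, if_pos rfl] at e1
    exact e1
  have hBa := genB _ _ _ (IsSt_Gamma0 p h2 (ea p) (Ua p)) ha'
  have hBb := genB _ _ _ (IsSt_Gamma0 p h2 (eb p) (Ub p)) hb'
  -- off-diagonal blocks vanish
  have hoff : ∀ k l, k ≠ l → Bl p P k l = 0 := by
    intro k l hkl
    have hklv : (k:ℕ) ≠ (l:ℕ) := fun hh => hkl (Fin.ext hh)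
    have hkv := k.isLt
    have hlv := l.isLt
    have hA := hBa k l
    have hB := hBb k l
    by_cases hkp : (k:ℕ) = p
    · -- k = p, l < p : Bl * eps = Bl
      rw [show ea p (l:ℕ) = 1 from if_neg (by omega), pow_one,
        show ea p (k:ℕ) = 0 from if_pos hkp, pow_zero, one_mul] at hA
      apply cancel_right hp h2 one_pos hplt
      rw [pow_one, mul_sub, mul_one, hA, sub_self]
    · by_cases hlp : (l:ℕ) = p
      · -- k < p, l = p : Bl = eps * Bl
        rw [show ea p (l:ℕ) = 0 from if_pos hlp, pow_zero, mul_one,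
          show ea p (k:ℕ) = 1 from if_neg hkp, pow_one] at hA
        apply cancel_left hp h2 one_pos hplt
        rw [pow_one, sub_mul, one_mul, ← hA, sub_self]
      · -- both < p
        rw [show ea p (l:ℕ) = 1 from if_neg hlp, pow_one,
          show ea p (k:ℕ) = 1 from if_neg hkp, pow_one] at hA
        rw [show eb p (l:ℕ) = p - 1 - (l:ℕ) from if_neg hlp,
          show eb p (k:ℕ) = p - 1 - (k:ℕ) from if_neg hkp] at hB
        have hAc : Commute (Bl p P k l) (eps p) := hA
        rw [← (hAc.pow_right (p - 1 - (k:ℕ))).eq] at hB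
        have hne : p - 1 - (l:ℕ) ≠ p - 1 - (k:ℕ) := by omega
        rcases lt_or_gt_of_ne hne with hlt | hlt
        · exact two_pow_cancel hp h2 hlt (by omega) hB.symm
        · exact two_pow_cancel hp h2 hlt (by omega) hB
  -- diagonal blocks commute with eps
  have hdiag : ∀ k, Bl p P k k * eps p = eps p * Bl p P k k := by
    intro k
    by_cases hkp : (k:ℕ) = p
    · have := hBb k k
      rwa [show eb p (k:ℕ) = 1 from if_pos hkp, pow_one] at this
    · have := hBa k k
      rwa [show ea p (k:ℕ) = 1 from if_neg hkp, pow_one] at this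
  -- the corner is idempotent
  have hs2 : Cr p h2 P * Cr p h2 P = Cr p h2 P := by
    have e1 := congrArg (Cr p h2) hidem
    rw [Cr_mul p h2] at e1
    rw [Finset.sum_congr rfl (fun m _ => by rw [hRzero m, zero_dotProduct]),
      Finset.sum_const_zero, zero_add] at e1
    exact e1
  have hs01 : Cr p h2 P = 0 ∨ Cr p h2 P = 1 := by
    have h0 : Cr p h2 P * (Cr p h2 P - 1) = 0 := by linear_combination hs2
    rcases mul_eq_zero.mp h0 with hh | hh
    · exact Or.inl hh
    · exact Or.inr (by linarith)
  -- diagonal blocks are idempotent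
  have hQidem : ∀ k, Bl p P k k * Bl p P k k = Bl p P k k := by
    intro k
    have e1 := congrArg (fun M => Bl p M k k) hidem
    rw [Bl_mul p h2, hRzero k, hvv0, add_zero] at e1
    rw [Finset.sum_eq_single k] at e1
    rotate_left
    · intro m _ hm
      rw [hoff k m (fun hh => hm hh.symm), zero_mul]
    · intro hmem; exact absurd (Finset.mem_univ _) hmem
    exact e1
  -- diagonal blocks are 0 or 1
  have hQ01 : ∀ k, Bl p P k k = 0 ∨ Bl p P k k = 1 := by
    intro k
    obtain ⟨f, hf⟩ := commutant hp h2 (hdiag k)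
    have hff : aeval (eps p) (f * f - f) = 0 := by
      rw [map_sub, map_mul, ← hf, hQidem k, sub_self]
    have hdvd : Phi p ∣ f * (f - 1) := by
      rw [mul_sub, mul_one]
      exact (aeval_eps_eq_zero_iff hp h2 _).mp hff
    rcases (Phi_prime hp).2.2 f (f-1) hdvd with hd | hd
    · left
      rw [hf]
      exact (aeval_eps_eq_zero_iff hp h2 f).mpr hd
    · right
      have hone : aeval (eps p) (f - 1) = 0 := (aeval_eps_eq_zero_iff hp h2 _).mpr hd
      rw [map_sub, map_one, sub_eq_zero] at hone
      rw [hf, hone]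
  -- generic column equation
  have genU : ∀ (G : Matrix (Fin (p^2)) (Fin (p^2)) ℤ)
      (DG : Fin (p+1) → Matrix (Fin (p-1)) (Fin (p-1)) ℤ) (VG : Fin (p+1) → Fin (p-1) → ℤ),
      IsSt p h2 G DG VG → P * G = G * P →
      ∀ k, (Bl p P k k).mulVec (VG k) + Uc p h2 P k
        = (DG k).mulVec (Uc p h2 P k) + (Cr p h2 P) • VG k := by
    intro G DG VG hG hcomm k
    have e1 : Uc p h2 (P * G) k = Uc p h2 (G * P) k := by rw [hcomm]
    rw [Uc_mul p h2, Uc_mul p h2, hG.2.2.2, one_smul, hG.2.1 k] at e1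
    rw [Finset.sum_congr rfl (fun m _ => by rw [hG.2.1 m]), Finset.sum_eq_single k] at e1
    rotate_left
    · intro m _ hm
      rw [hoff k m (fun hh => hm hh.symm), Matrix.zero_mulVec]
    · intro hmem; exact absurd (Finset.mem_univ _) hmem
    rw [Finset.sum_congr rfl (fun m _ => by rw [hG.1 k m]), Finset.sum_eq_single k] at e1
    rotate_left
    · intro m _ hm
      rw [if_neg (fun hh : k = m => hm hh.symm), Matrix.zero_mulVec]
    · intro hmem; exact absurd (Finset.mem_univ _) hmem
    rw [if_pos rfl] at e1
    exact e1
  -- the specialized column equation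
  have hUceq : ∀ k, (eps p - 1).mulVec (Uc p h2 P k)
      = (Bl p P k k).mulVec (sing p 0) - (Cr p h2 P) • sing p 0 := by
    intro k
    have hkv := k.isLt
    have he : (Bl p P k k).mulVec (sing p 0) + Uc p h2 P k
        = (eps p).mulVec (Uc p h2 P k) + (Cr p h2 P) • sing p 0 := by
      by_cases hkp : (k:ℕ) = p
      · have := genU _ _ _ (IsSt_Gamma0 p h2 (eb p) (Ub p)) hb' k
        have hV : (fun t : Fin (p-1) => Ub p (k:ℕ) (t:ℕ)) = sing p 0 := by
          funext t
          simp only [Ub, sing]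
          rw [if_pos hkp]
        rwa [show eb p (k:ℕ) = 1 from if_pos hkp, pow_one, hV] at this
      · have := genU _ _ _ (IsSt_Gamma0 p h2 (ea p) (Ua p)) ha' k
        have hV : (fun t : Fin (p-1) => Ua p (k:ℕ) (t:ℕ)) = sing p 0 := by
          funext t
          simp only [Ua, sing]
          split_ifs <;> omega
        rwa [show ea p (k:ℕ) = 1 from if_neg hkp, pow_one, hV] at this
    funext t
    have e2 := congrFun he t
    simp only [Pi.add_apply, Pi.sub_apply, Pi.smul_apply, Matrix.sub_mulVec,
      Matrix.one_mulVec, smul_eq_mul] at e2 ⊢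
    linarith
  have hp3 : (3:ℤ) ≤ (p:ℤ) := by exact_mod_cast (by omega : 3 ≤ p)
  -- key: diagonal blocks equal corner • 1 and column blocks vanish
  have hkey : ∀ k, Bl p P k k = (Cr p h2 P) • 1 ∧ Uc p h2 P k = 0 := by
    intro k
    have heq := hUceq k
    have hL := sum_eps_sub_one_mulVec h2 (Uc p h2 P k)
    have huzero : (eps p - 1).mulVec (Uc p h2 P k) = 0 → Uc p h2 P k = 0 := by
      intro hz
      apply cancel_mulVec hp h2 one_pos hplt
      rw [pow_one]
      exact hz
    rcases hQ01 k with hq | hq <;> rcases hs01 with hcs | hcs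
    · rw [hq, hcs, Matrix.zero_mulVec, zero_smul, sub_zero] at heq
      exact ⟨by rw [hq, hcs, zero_smul], huzero heq⟩
    · -- Q = 0, s = 1 : contradiction
      exfalso
      rw [hq, hcs, Matrix.zero_mulVec, one_smul, zero_sub] at heq
      have e3 := congrArg (fun v : Fin (p-1) → ℤ => ∑ i, v i) heq
      rw [hL] at e3
      have e4 : ∑ i, (-(sing p 0) : Fin (p-1) → ℤ) i = -1 := by
        have : ∑ i, (-(sing p 0) : Fin (p-1) → ℤ) i = -∑ i, sing p 0 i := by
          rw [← Finset.sum_neg_distrib]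
          rfl
        rw [this, sum_sing0 h2]
      rw [e4] at e3
      have hdv : (p:ℤ) ∣ 1 := ⟨Uc p h2 P k ⟨p-2, by omega⟩, by linarith⟩
      have := Int.le_of_dvd one_pos hdv
      linarith
    · -- Q = 1, s = 0 : contradiction
      exfalso
      rw [hq, hcs, Matrix.one_mulVec, zero_smul, sub_zero] at heq
      have e3 := congrArg (fun v : Fin (p-1) → ℤ => ∑ i, v i) heq
      rw [hL, sum_sing0 h2] at e3
      have hdv : (p:ℤ) ∣ 1 := ⟨-(Uc p h2 P k ⟨p-2, by omega⟩), by linarith⟩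
      have := Int.le_of_dvd one_pos hdv
      linarith
    · rw [hq, hcs, Matrix.one_mulVec, one_smul, sub_self] at heq
      exact ⟨by rw [hq, hcs, one_smul], huzero heq⟩
  -- conclude
  rcases hs01 with hcs | hcs
  · left
    apply ext_blocks p h2
    · intro k l
      rw [Bl_zero p]
      by_cases hkl : k = l
      · subst hkl
        rw [(hkey k).1, hcs, zero_smul]
      · exact hoff k l hkl
    · intro k
      rw [Uc_zero p h2, (hkey k).2]
    · intro l
      rw [Rr_zero p h2, hRzero l]
    · rw [Cr_zero p h2, hcs]
  · right
    apply ext_blocks p h2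
    · intro k l
      rw [Bl_one p h2]
      by_cases hkl : k = l
      · subst hkl
        rw [(hkey k).1, hcs, one_smul, if_pos rfl]
      · rw [if_neg hkl]
        exact hoff k l hkl
    · intro k
      rw [Uc_one p h2, (hkey k).2]
    · intro l
      rw [Rr_one p h2, hRzero l]
    · rw [Cr_one p h2, hcs]

end Blocks

lemma ext_mulVec {n : ℕ} {M N : Matrix (Fin n) (Fin n) ℤ}
    (h : ∀ v, M.mulVec v = N.mulVec v) : M = N := by
  ext i j
  simpa using congrFun (h (Pi.single j 1)) i

theorem gamma0_faithful_indecomposable' (p : ℕ) (hp : p.Prime) (hodd : 2 < p) :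
    Gamma0a p ^ p = 1 ∧ Gamma0b p ^ p = 1 ∧
    Gamma0a p * Gamma0b p = Gamma0b p * Gamma0a p ∧
    (∀ i j : ℕ, Gamma0a p ^ i * Gamma0b p ^ j = 1 → p ∣ i ∧ p ∣ j) ∧
    ¬ ∃ A B : Submodule ℤ (Fin (p ^ 2) → ℤ),
        (∀ x ∈ A, (Gamma0a p).mulVec x ∈ A) ∧ (∀ x ∈ A, (Gamma0b p).mulVec x ∈ A) ∧
        (∀ x ∈ B, (Gamma0a p).mulVec x ∈ B) ∧ (∀ x ∈ B, (Gamma0b p).mulVec x ∈ B) ∧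
        A ≠ ⊥ ∧ B ≠ ⊥ ∧ A ⊓ B = ⊥ ∧ A ⊔ B = ⊤ := by
  refine ⟨Gamma0a_pow_p p hp hodd, Gamma0b_pow_p p hp hodd, Gamma0_comm p hp hodd,
    fun i j h => Gamma0_faithful p hp hodd i j h, ?_⟩
  rintro ⟨A, B, hAa, hAb, hBa, hBb, hA0, hB0, hinf, hsup⟩
  have hcompl : IsCompl A B := ⟨disjoint_iff.mpr hinf, codisjoint_iff.mpr hsup⟩
  set f : (Fin (p^2) → ℤ) →ₗ[ℤ] (Fin (p^2) → ℤ)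
    := A.subtype.comp (A.linearProjOfIsCompl B hcompl) with hfdef
  have hfA : ∀ v ∈ A, f v = v := by
    intro v hv
    show (↑(A.linearProjOfIsCompl B hcompl v) : Fin (p^2) → ℤ) = v
    rw [show A.linearProjOfIsCompl B hcompl v
        = A.linearProjOfIsCompl B hcompl ↑(⟨v, hv⟩ : A) from rfl]
    exact congrArg Subtype.val (Submodule.projectionOnto_apply_left hcompl ⟨v, hv⟩)
  have hfB : ∀ v ∈ B, f v = 0 := by
    intro v hv
    show (↑(A.linearProjOfIsCompl B hcompl v) : Fin (p^2) → ℤ) = 0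
    rw [show A.linearProjOfIsCompl B hcompl v
        = A.linearProjOfIsCompl B hcompl ↑(⟨v, hv⟩ : B) from rfl]
    exact congrArg Subtype.val (Submodule.projectionOnto_apply_right hcompl ⟨v, hv⟩)
  have hmem : ∀ x, f x ∈ A := fun x => (A.linearProjOfIsCompl B hcompl x).2
  have hdecomp : ∀ x : Fin (p^2) → ℤ, ∃ a ∈ A, ∃ b ∈ B, a + b = x := by
    intro x
    have hx : x ∈ A ⊔ B := by rw [hsup]; trivial
    exact Submodule.mem_sup.mp hx
  have hfx : ∀ (x a b : Fin (p^2) → ℤ), a ∈ A → b ∈ B → a + b = x → f x = a := by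
    intro x a b haA hbB habx
    rw [← habx, map_add, hfA a haA, hfB b hbB, add_zero]
  have hcommf : ∀ (G : Matrix (Fin (p^2)) (Fin (p^2)) ℤ),
      (∀ v ∈ A, G.mulVec v ∈ A) → (∀ v ∈ B, G.mulVec v ∈ B) →
      ∀ x, f (G.mulVec x) = G.mulVec (f x) := by
    intro G hGA hGB x
    obtain ⟨a, haA, b, hbB, habx⟩ := hdecomp x
    have h1 : G.mulVec a + G.mulVec b = G.mulVec x := by
      rw [← habx, Matrix.mulVec_add]
    rw [hfx _ _ _ (hGA a haA) (hGB b hbB) h1, hfx x a b haA hbB habx]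
  have hffx : ∀ x, f (f x) = f x := fun x => hfA _ (hmem x)
  set Pm : Matrix (Fin (p^2)) (Fin (p^2)) ℤ := LinearMap.toMatrix' f with hPm
  have hPv : ∀ v, Pm.mulVec v = f v := by
    intro v
    rw [hPm, ← Matrix.toLin'_apply, Matrix.toLin'_toMatrix']
  have hPP : Pm * Pm = Pm := ext_mulVec fun v => by
    rw [← Matrix.mulVec_mulVec, hPv (Pm.mulVec v), hPv v]
    exact hffx v
  have hPa : Pm * Gamma0a p = Gamma0a p * Pm := ext_mulVec fun v => by
    rw [← Matrix.mulVec_mulVec, ← Matrix.mulVec_mulVec, hPv ((Gamma0a p).mulVec v), hPv v,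
      hcommf _ hAa hBa v]
  have hPb : Pm * Gamma0b p = Gamma0b p * Pm := ext_mulVec fun v => by
    rw [← Matrix.mulVec_mulVec, ← Matrix.mulVec_mulVec, hPv ((Gamma0b p).mulVec v), hPv v,
      hcommf _ hAb hBb v]
  rcases projector_trivial p hp hodd Pm hPa hPb hPP with h0 | h1
  · obtain ⟨a, haA, ha0⟩ := (Submodule.ne_bot_iff A).mp hA0
    apply ha0
    have hh := hfA a haA
    rw [← hPv, h0, Matrix.zero_mulVec] at hh
    exact hh.symm
  · obtain ⟨b, hbB, hb0⟩ := (Submodule.ne_bot_iff B).mp hB0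
    apply hb0
    have hh := hfB b hbB
    rw [← hPv, h1, Matrix.one_mulVec] at hh
    exact hh


end CpCp

section test

namespace CpCp

/-- **Lemma 5.** For `p > 2`, `Γ₀` is a faithful indecomposable `ℤ`-representation of
`G = ⟨a, b⟩ ≅ C_p × C_p` of degree `p²`: the matrices `Γ₀(a)` and `Γ₀(b)` commute and have
order dividing `p`, the resulting homomorphism of `C_p × C_p` into `GL(p², ℤ)` is injective,
and the `ℤ[G]`-module `ℤ^{p²}` on which `a` acts by `Γ₀(a)` and `b` acts by `Γ₀(b)` is not a
direct sum of two nonzero `ℤ[G]`-submodules. -/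
theorem gamma0_faithful_indecomposable (p : ℕ) (hp : p.Prime) (hodd : 2 < p) :
    Gamma0a p ^ p = 1 ∧ Gamma0b p ^ p = 1 ∧
    Gamma0a p * Gamma0b p = Gamma0b p * Gamma0a p ∧
    (∀ i j : ℕ, Gamma0a p ^ i * Gamma0b p ^ j = 1 → p ∣ i ∧ p ∣ j) ∧
    ¬ ∃ A B : Submodule ℤ (Fin (p ^ 2) → ℤ),
        (∀ x ∈ A, (Gamma0a p).mulVec x ∈ A) ∧ (∀ x ∈ A, (Gamma0b p).mulVec x ∈ A) ∧
        (∀ x ∈ B, (Gamma0a p).mulVec x ∈ B) ∧ (∀ x ∈ B, (Gamma0b p).mulVec x ∈ B) ∧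
        A ≠ ⊥ ∧ B ≠ ⊥ ∧ A ⊓ B = ⊥ ∧ A ⊔ B = ⊤ := by
  exact gamma0_faithful_indecomposable' p hp hodd

end CpCp
end test
end
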